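/- arXiv:1908.08512 — 4 statements merged into one kernel-verified Lean document; each statement's English description precedes it below -/
import Mathlib

section
/- Let u₀ : (0,∞) → ℝ be continuously differentiable with lim_{r→0⁺} u₀(r) = 0 and lim_{r→∞} u₀(r) = π, and let u₁ : (0,∞) → ℝ be measurable with E(u₀,u₁) < ∞. Then E(u₀,u₁) ≥ 4π, and equality holds if and only if u₁ = 0 almost everywhere and there exists λ > 0 such that u₀(r) = 2·arctan(r/λ) for all r > 0. -/
open MeasureTheory Set Filter
open scoped ENNReal


lemma sin_two_arctan (x : ℝ) : Real.sin (2 * Real.arctan x) = 2 * x / (1 + x ^ 2) := by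
  rw [Real.sin_two_mul, Real.sin_arctan, Real.cos_arctan]
  have h : Real.sqrt (1 + x ^ 2) ^ 2 = 1 + x ^ 2 := Real.sq_sqrt (by positivity)
  have h0 : Real.sqrt (1 + x ^ 2) ≠ 0 := by positivity
  rw [mul_assoc, div_mul_div_comm, ← sq, h]
  ring

lemma Q_hasDeriv {l : ℝ} (hl : 0 < l) {r : ℝ} (hr : 0 < r) :
    HasDerivAt (fun r : ℝ => 2 * Real.arctan (r / l))
      (Real.sin (2 * Real.arctan (r / l)) / r) r := by
  have h1 : HasDerivAt (fun r : ℝ => r / l) (1 / l) r := by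
    simpa using (hasDerivAt_id r).div_const l
  have h2 := (Real.hasDerivAt_arctan (r / l)).comp r h1
  have h3 := h2.const_mul 2
  refine h3.congr_deriv ?_
  rw [sin_two_arctan]
  have hl' := hl.ne'
  have hr' := hr.ne'
  field_simp

lemma ode_unique {f g : ℝ → ℝ}
    (hf : ∀ t : ℝ, 0 < t → HasDerivAt f (Real.sin (f t) / t) t)
    (hg : ∀ t : ℝ, 0 < t → HasDerivAt g (Real.sin (g t) / t) t)
    {r₀ : ℝ} (hr₀ : 0 < r₀) (heq : f r₀ = g r₀) {r : ℝ} (hr : 0 < r) : f r = g r := by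
  set a : ℝ := min r r₀ / 2 with ha_def
  have ha : 0 < a := by positivity
  set b : ℝ := max r r₀ + 1 with hb_def
  set v : ℝ → ℝ → ℝ := fun t y => Real.sin y / max t a with hv_def
  have hva : ∀ t : ℝ, a ≤ max t a := fun t => le_max_right t a
  have hv : ∀ t : ℝ, LipschitzOnWith (Real.toNNReal (1/a)) (v t) univ := by
    intro t
    apply LipschitzOnWith.of_dist_le_mul
    intro y₁ _ y₂ _
    have hmax : 0 < max t a := lt_of_lt_of_le ha (hva t)
    simp only [hv_def, Real.dist_eq, div_sub_div_same, abs_div, abs_of_pos hmax]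
    rw [Real.coe_toNNReal _ (by positivity)]
    have hsin : |Real.sin y₁ - Real.sin y₂| ≤ |y₁ - y₂| := by
      rw [Real.sin_sub_sin]
      have h1 : |Real.sin ((y₁ - y₂) / 2)| ≤ |(y₁ - y₂) / 2| := Real.abs_sin_le_abs
      have h2 : |Real.cos ((y₁ + y₂) / 2)| ≤ 1 := Real.abs_cos_le_one _
      calc |2 * Real.sin ((y₁ - y₂) / 2) * Real.cos ((y₁ + y₂) / 2)|
          = 2 * |Real.sin ((y₁ - y₂) / 2)| * |Real.cos ((y₁ + y₂) / 2)| := by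
            rw [abs_mul, abs_mul]; norm_num
        _ ≤ 2 * |(y₁ - y₂) / 2| * 1 := by
            apply mul_le_mul _ h2 (abs_nonneg _) (by positivity)
            nlinarith [abs_nonneg ((y₁-y₂)/2)]
        _ = |y₁ - y₂| := by rw [abs_div, abs_two]; ring
    calc |Real.sin y₁ - Real.sin y₂| / max t a
        ≤ |y₁ - y₂| / a := by gcongr; exact hva t
      _ = 1 / a * |y₁ - y₂| := by ring
  have hmem : ∀ t : ℝ, t ∈ Ioo a b → 0 < t := fun t ht =>
    lt_trans ha ht.1
  have key : ∀ t ∈ Ioo a b, HasDerivAt f (v t (f t)) t ∧ f t ∈ univ := by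
    intro t ht
    have h0 : 0 < t := hmem t ht
    have : max t a = t := max_eq_left (le_of_lt ht.1)
    refine ⟨?_, trivial⟩
    simpa only [hv_def, this] using hf t h0
  have key' : ∀ t ∈ Ioo a b, HasDerivAt g (v t (g t)) t ∧ g t ∈ univ := by
    intro t ht
    have h0 : 0 < t := hmem t ht
    have : max t a = t := max_eq_left (le_of_lt ht.1)
    refine ⟨?_, trivial⟩
    simpa only [hv_def, this] using hg t h0
  have hr₀mem : r₀ ∈ Ioo a b := by
    constructor
    · calc a = min r r₀ / 2 := rfl
        _ < min r r₀ := by have := lt_min hr hr₀; linarith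
        _ ≤ r₀ := min_le_right r r₀
    · calc r₀ ≤ max r r₀ := le_max_right r r₀
        _ < b := by simp [hb_def]
  have hrmem : r ∈ Ioo a b := by
    constructor
    · calc a = min r r₀ / 2 := rfl
        _ < min r r₀ := by have := lt_min hr hr₀; linarith
        _ ≤ r := min_le_left r r₀
    · calc r ≤ max r r₀ := le_max_left r r₀
        _ < b := by simp [hb_def]
  exact ODE_solution_unique_of_mem_Ioo (fun t _ => hv t) hr₀mem key key' heq hrmem


lemma pointwise_id {φ s t : ℝ} (ht : t ≠ 0) :
    (φ ^ 2 + s ^ 2 / t ^ 2) * t - 2 * s * φ = (t * φ - s) ^ 2 / t := by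
  field_simp; ring

lemma pointwise_ineq {φ s t : ℝ} (ht : 0 < t) : 2 * s * φ ≤ (φ ^ 2 + s ^ 2 / t ^ 2) * t := by
  have h := pointwise_id (φ := φ) (s := s) ht.ne'
  nlinarith [sq_nonneg (t * φ - s), div_nonneg (sq_nonneg (t * φ - s)) ht.le]

section main
variable (u₀ u₁ : ℝ → ℝ)
  (hu₀ : ContDiffOn ℝ 1 u₀ (Ioi (0:ℝ)))
  (hlim0 : Tendsto u₀ (nhdsWithin (0:ℝ) (Ioi 0)) (nhds 0))
  (hliminf : Tendsto u₀ atTop (nhds Real.pi))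

-- the "g" function and its properties
include hu₀ in
lemma g_hasDeriv {r : ℝ} (hr : 0 < r) :
    HasDerivAt (fun x => 2 - 2 * Real.cos (u₀ x))
      (2 * Real.sin (u₀ r) * deriv u₀ r) r := by
  have hd : HasDerivAt u₀ (deriv u₀ r) r := by
    have := (hu₀.differentiableOn one_ne_zero r hr).differentiableAt (Ioi_mem_nhds hr)
    exact this.hasDerivAt
  have h1 := (Real.hasDerivAt_cos (u₀ r)).comp r hd
  have h2 := (h1.const_mul (2:ℝ)).const_sub (2:ℝ)
  refine h2.congr_deriv ?_
  ring

include hlim0 in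
lemma g_lim0 : Tendsto (fun x => 2 - 2 * Real.cos (u₀ x)) (nhdsWithin (0:ℝ) (Ioi 0)) (nhds 0) := by
  have hc : Continuous fun y : ℝ => 2 - 2 * Real.cos y := by continuity
  have := (hc.tendsto 0).comp hlim0
  simpa [Function.comp_def] using this

include hliminf in
lemma g_limtop : Tendsto (fun x => 2 - 2 * Real.cos (u₀ x)) atTop (nhds 4) := by
  have hc : Continuous fun y : ℝ => 2 - 2 * Real.cos y := by continuity
  have := (hc.tendsto Real.pi).comp hliminf
  have h4 : (2:ℝ) - 2 * Real.cos Real.pi = 4 := by rw [Real.cos_pi]; ring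
  rw [← h4]
  exact this

include hu₀ in
lemma FTC_interval {a b : ℝ} (ha : 0 < a) (hab : a ≤ b) :
    ∫ t in a..b, 2 * Real.sin (u₀ t) * deriv u₀ t
      = (2 - 2 * Real.cos (u₀ b)) - (2 - 2 * Real.cos (u₀ a)) := by
  apply intervalIntegral.integral_eq_sub_of_hasDerivAt
  · intro t ht
    rw [uIcc_of_le hab] at ht
    exact g_hasDeriv u₀ hu₀ (lt_of_lt_of_le ha ht.1)
  · apply ContinuousOn.intervalIntegrable
    rw [uIcc_of_le hab]
    have hsub : Icc a b ⊆ Ioi 0 := fun x hx => lt_of_lt_of_le ha hx.1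
    have hder : ContinuousOn (deriv u₀) (Ioi 0) :=
      hu₀.continuousOn_deriv_of_isOpen isOpen_Ioi le_rfl
    have hcont0 : ContinuousOn u₀ (Ioi 0) := hu₀.continuousOn
    have : ContinuousOn (fun t => 2 * Real.sin (u₀ t) * deriv u₀ t) (Ioi 0) :=
      ((continuousOn_const.mul ((Real.continuous_sin.comp_continuousOn hcont0))).mul hder)
    exact this.mono hsub


include hu₀ in
lemma interval_bound {a b : ℝ} (ha : 0 < a) (hab : a ≤ b) :
    ENNReal.ofReal ((2 - 2 * Real.cos (u₀ b)) - (2 - 2 * Real.cos (u₀ a))) ≤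
      ∫⁻ r in Ioi (0:ℝ),
        ENNReal.ofReal ((deriv u₀ r ^ 2 + Real.sin (u₀ r) ^ 2 / r ^ 2) * r) := by
  set F₀ : ℝ → ℝ := fun r => (deriv u₀ r ^ 2 + Real.sin (u₀ r) ^ 2 / r ^ 2) * r with hF₀
  have hF₀cont : ContinuousOn F₀ (Ioi 0) := by
    have hder : ContinuousOn (deriv u₀) (Ioi 0) :=
      hu₀.continuousOn_deriv_of_isOpen isOpen_Ioi le_rfl
    have hcont0 : ContinuousOn u₀ (Ioi 0) := hu₀.continuousOn
    apply ContinuousOn.mul _ continuousOn_id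
    apply ContinuousOn.add (hder.pow 2)
    apply ContinuousOn.div ((Real.continuous_sin.comp_continuousOn hcont0).pow 2)
      (continuousOn_id.pow 2)
    intro x hx
    have : (0:ℝ) < x := hx
    exact pow_ne_zero 2 this.ne'
  have hsub : Icc a b ⊆ Ioi 0 := fun x hx => lt_of_lt_of_le ha hx.1
  have hint : IntegrableOn F₀ (Icc a b) := (hF₀cont.mono hsub).integrableOn_Icc
  have step1 : (2 - 2 * Real.cos (u₀ b)) - (2 - 2 * Real.cos (u₀ a)) ≤ ∫ t in a..b, F₀ t := by
    rw [← FTC_interval u₀ hu₀ ha hab]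
    apply intervalIntegral.integral_mono_on hab _ _ ?_
    · apply ContinuousOn.intervalIntegrable
      rw [uIcc_of_le hab]
      have hder : ContinuousOn (deriv u₀) (Ioi 0) :=
        hu₀.continuousOn_deriv_of_isOpen isOpen_Ioi le_rfl
      have hcont0 : ContinuousOn u₀ (Ioi 0) := hu₀.continuousOn
      exact ((continuousOn_const.mul
        ((Real.continuous_sin.comp_continuousOn hcont0))).mul hder).mono hsub
    · apply ContinuousOn.intervalIntegrable
      rw [uIcc_of_le hab]
      exact hF₀cont.mono hsub
    · intro x hx
      exact pointwise_ineq (lt_of_lt_of_le ha hx.1)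
  calc ENNReal.ofReal ((2 - 2 * Real.cos (u₀ b)) - (2 - 2 * Real.cos (u₀ a)))
      ≤ ENNReal.ofReal (∫ t in a..b, F₀ t) := ENNReal.ofReal_le_ofReal step1
    _ = ∫⁻ t in Ioc a b, ENNReal.ofReal (F₀ t) := by
        rw [intervalIntegral.integral_of_le hab]
        apply MeasureTheory.ofReal_integral_eq_lintegral_ofReal
        · exact hint.mono_set Ioc_subset_Icc_self
        · rw [EventuallyLE, ae_restrict_iff' measurableSet_Ioc]
          apply ae_of_all
          intro t ht
          have ht0 : (0:ℝ) < t := lt_of_lt_of_le ha ht.1.le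
          have h1 : (0:ℝ) ≤ Real.sin (u₀ t) ^ 2 / t ^ 2 := by positivity
          simp only [hF₀, Pi.zero_apply]
          nlinarith [sq_nonneg (deriv u₀ t)]
    _ ≤ ∫⁻ t in Ioi (0:ℝ), ENNReal.ofReal (F₀ t) := by
        apply lintegral_mono_set
        exact fun x hx => lt_of_lt_of_le ha hx.1.le

include hu₀ hlim0 hliminf in
lemma lower_bound :
    ENNReal.ofReal 4 ≤
      ∫⁻ r in Ioi (0:ℝ),
        ENNReal.ofReal ((deriv u₀ r ^ 2 + Real.sin (u₀ r) ^ 2 / r ^ 2) * r) := by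
  have ha_tend : Tendsto (fun n : ℕ => 1 / ((n:ℝ) + 1)) atTop (nhdsWithin (0:ℝ) (Ioi 0)) := by
    rw [tendsto_nhdsWithin_iff]
    exact ⟨tendsto_one_div_add_atTop_nhds_zero_nat,
      Eventually.of_forall fun n => mem_Ioi.mpr (by positivity)⟩
  have hb_tend : Tendsto (fun n : ℕ => (n:ℝ) + 1) atTop atTop :=
    tendsto_atTop_add_const_right _ 1 tendsto_natCast_atTop_atTop
  have hgab : Tendsto (fun n : ℕ =>
      (2 - 2 * Real.cos (u₀ ((n:ℝ)+1))) - (2 - 2 * Real.cos (u₀ (1/((n:ℝ)+1))))) atTop (nhds 4) := by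
    have h1 := (g_limtop u₀ hliminf).comp hb_tend
    have h2 := (g_lim0 u₀ hlim0).comp ha_tend
    have := h1.sub h2
    simpa using this
  have htend : Tendsto (fun n : ℕ => ENNReal.ofReal
      ((2 - 2 * Real.cos (u₀ ((n:ℝ)+1))) - (2 - 2 * Real.cos (u₀ (1/((n:ℝ)+1)))))) atTop
      (nhds (ENNReal.ofReal 4)) :=
    (ENNReal.continuous_ofReal.tendsto 4).comp hgab
  apply le_of_tendsto' htend
  intro n
  have h1 : (0:ℝ) < 1/((n:ℝ)+1) := by positivity
  have h2 : 1/((n:ℝ)+1) ≤ (n:ℝ)+1 := by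
    rw [div_le_iff₀ (by positivity)]
    nlinarith [Nat.cast_nonneg (α := ℝ) n]
  exact interval_bound u₀ hu₀ h1 h2


include hu₀ in
lemma F₀_contOn :
    ContinuousOn (fun r => (deriv u₀ r ^ 2 + Real.sin (u₀ r) ^ 2 / r ^ 2) * r) (Ioi 0) := by
  have hder : ContinuousOn (deriv u₀) (Ioi 0) :=
    hu₀.continuousOn_deriv_of_isOpen isOpen_Ioi le_rfl
  have hcont0 : ContinuousOn u₀ (Ioi 0) := hu₀.continuousOn
  apply ContinuousOn.mul _ continuousOn_id
  apply ContinuousOn.add (hder.pow 2)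
  apply ContinuousOn.div ((Real.continuous_sin.comp_continuousOn hcont0).pow 2)
    (continuousOn_id.pow 2)
  intro x hx
  have : (0:ℝ) < x := hx
  exact pow_ne_zero 2 this.ne'

end main

lemma converse_value (u₀ u₁ : ℝ → ℝ)
    (hae : ∀ᵐ r ∂(volume.restrict (Ioi (0:ℝ))), u₁ r = 0)
    {l : ℝ} (hl : 0 < l) (hQ : ∀ r : ℝ, 0 < r → u₀ r = 2 * Real.arctan (r / l)) :
    (∫⁻ r in Ioi (0:ℝ), ENNReal.ofReal
        (((u₁ r) ^ 2 + (deriv u₀ r) ^ 2 + (Real.sin (u₀ r)) ^ 2 / r ^ 2) * r))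
      = ENNReal.ofReal 4 := by
  have hl2 : ∀ r : ℝ, (0:ℝ) < l ^ 2 + r ^ 2 := fun r => by positivity
  have hH : ∀ r ∈ Ioi (0:ℝ), HasDerivAt (fun x : ℝ => -4 * l ^ 2 / (l ^ 2 + x ^ 2))
      (8 * l ^ 2 * r / (l ^ 2 + r ^ 2) ^ 2) r := by
    intro r _
    have h1 : HasDerivAt (fun x : ℝ => l ^ 2 + x ^ 2) (2 * r) r := by
      simpa using (hasDerivAt_pow 2 r).const_add (l ^ 2)
    have h2 := (hasDerivAt_const r (-4 * l ^ 2)).div h1 (hl2 r).ne'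
    refine h2.congr_deriv ?_
    field_simp
    ring
  have hcont : ContinuousWithinAt (fun x : ℝ => -4 * l ^ 2 / (l ^ 2 + x ^ 2)) (Ici 0) 0 := by
    apply Continuous.continuousWithinAt
    exact continuous_const.div (by continuity) (fun x => (hl2 x).ne')
  have hpos : ∀ r ∈ Ioi (0:ℝ), 0 ≤ 8 * l ^ 2 * r / (l ^ 2 + r ^ 2) ^ 2 := by
    intro r hr
    have : (0:ℝ) < r := hr
    positivity
  have hlim : Tendsto (fun x : ℝ => -4 * l ^ 2 / (l ^ 2 + x ^ 2)) atTop (nhds 0) := by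
    apply Tendsto.div_atTop (tendsto_const_nhds)
    exact tendsto_atTop_add_const_left _ _ (tendsto_pow_atTop two_ne_zero)
  have hIntEq := integral_Ioi_of_hasDerivAt_of_nonneg hcont hH hpos hlim
  have hInt := integrableOn_Ioi_deriv_of_nonneg hcont hH hpos hlim
  have hIntEq' : (∫ r in Ioi (0:ℝ), 8 * l ^ 2 * r / (l ^ 2 + r ^ 2) ^ 2) = 4 := by
    rw [hIntEq]
    field_simp
    ring
  have hae2 : ∀ᵐ r ∂(volume.restrict (Ioi (0:ℝ))),
      ENNReal.ofReal (((u₁ r) ^ 2 + (deriv u₀ r) ^ 2 + (Real.sin (u₀ r)) ^ 2 / r ^ 2) * r)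
        = ENNReal.ofReal (8 * l ^ 2 * r / (l ^ 2 + r ^ 2) ^ 2) := by
    filter_upwards [hae, ae_restrict_mem measurableSet_Ioi] with r h1 h2
    have hr : (0:ℝ) < r := h2
    have hderiv : deriv u₀ r = 2 * l / (l ^ 2 + r ^ 2) := by
      have hQd := Q_hasDeriv hl hr
      have heq : deriv u₀ r = deriv (fun x : ℝ => 2 * Real.arctan (x / l)) r := by
        apply Filter.EventuallyEq.deriv_eq
        filter_upwards [Ioi_mem_nhds hr] with x hx
        exact hQ x hx
      rw [heq, hQd.deriv, sin_two_arctan]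
      field_simp
    have hsin : Real.sin (u₀ r) = 2 * l * r / (l ^ 2 + r ^ 2) := by
      rw [hQ r hr, sin_two_arctan]
      field_simp
    rw [h1, hderiv, hsin]
    congr 1
    field_simp
    ring
  rw [lintegral_congr_ae hae2,
    ← MeasureTheory.ofReal_integral_eq_lintegral_ofReal hInt ?_, hIntEq']
  rw [EventuallyLE, ae_restrict_iff' measurableSet_Ioi]
  exact ae_of_all _ fun r hr => hpos r hr


lemma equality_case (u₀ u₁ : ℝ → ℝ)
    (hu₀ : ContDiffOn ℝ 1 u₀ (Ioi (0:ℝ)))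
    (hlim0 : Tendsto u₀ (nhdsWithin (0:ℝ) (Ioi 0)) (nhds 0))
    (hliminf : Tendsto u₀ atTop (nhds Real.pi))
    (hmeas : Measurable u₁)
    (hIeq : (∫⁻ r in Ioi (0:ℝ), ENNReal.ofReal
        (((u₁ r) ^ 2 + (deriv u₀ r) ^ 2 + (Real.sin (u₀ r)) ^ 2 / r ^ 2) * r))
      = ENNReal.ofReal 4) :
    (∀ᵐ r ∂(volume.restrict (Ioi (0:ℝ))), u₁ r = 0) ∧
      ∃ l : ℝ, 0 < l ∧ ∀ r : ℝ, 0 < r → u₀ r = 2 * Real.arctan (r / l) := by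
  have hF₀cont := F₀_contOn u₀ hu₀
  have hI₀ge : ENNReal.ofReal 4 ≤
      ∫⁻ r in Ioi (0:ℝ), ENNReal.ofReal ((deriv u₀ r ^ 2 + Real.sin (u₀ r) ^ 2 / r ^ 2) * r) :=
    lower_bound u₀ hu₀ hlim0 hliminf
  have hI₀le : (∫⁻ r in Ioi (0:ℝ),
      ENNReal.ofReal ((deriv u₀ r ^ 2 + Real.sin (u₀ r) ^ 2 / r ^ 2) * r))
      ≤ ENNReal.ofReal 4 := by
    rw [← hIeq]
    apply lintegral_mono_ae
    rw [ae_restrict_iff' measurableSet_Ioi]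
    apply ae_of_all
    intro r hr
    have hr0 : (0:ℝ) < r := hr
    apply ENNReal.ofReal_le_ofReal
    nlinarith [sq_nonneg (u₁ r)]
  have hI₀eq : (∫⁻ r in Ioi (0:ℝ),
      ENNReal.ofReal ((deriv u₀ r ^ 2 + Real.sin (u₀ r) ^ 2 / r ^ 2) * r))
      = ENNReal.ofReal 4 := le_antisymm hI₀le hI₀ge
  have haemeasF₀ : AEMeasurable
      (fun r => ENNReal.ofReal ((deriv u₀ r ^ 2 + Real.sin (u₀ r) ^ 2 / r ^ 2) * r))
      (volume.restrict (Ioi (0:ℝ))) :=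
    (hF₀cont.aemeasurable measurableSet_Ioi).ennreal_ofReal
  have hsplit : (∫⁻ r in Ioi (0:ℝ), ENNReal.ofReal
        (((u₁ r) ^ 2 + (deriv u₀ r) ^ 2 + (Real.sin (u₀ r)) ^ 2 / r ^ 2) * r))
      = (∫⁻ r in Ioi (0:ℝ),
          ENNReal.ofReal ((deriv u₀ r ^ 2 + Real.sin (u₀ r) ^ 2 / r ^ 2) * r))
        + ∫⁻ r in Ioi (0:ℝ), ENNReal.ofReal (u₁ r ^ 2 * r) := by
    rw [← lintegral_add_left' haemeasF₀]
    apply lintegral_congr_ae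
    filter_upwards [ae_restrict_mem measurableSet_Ioi] with r hr
    have hr0 : (0:ℝ) < r := hr
    have h1 : ((u₁ r) ^ 2 + (deriv u₀ r) ^ 2 + Real.sin (u₀ r) ^ 2 / r ^ 2) * r
        = (deriv u₀ r ^ 2 + Real.sin (u₀ r) ^ 2 / r ^ 2) * r + u₁ r ^ 2 * r := by ring
    rw [h1, ENNReal.ofReal_add (mul_nonneg (by positivity) hr0.le)
      (mul_nonneg (sq_nonneg _) hr0.le)]
  have hJ : (∫⁻ r in Ioi (0:ℝ), ENNReal.ofReal (u₁ r ^ 2 * r)) = 0 := by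
    rw [hsplit, hI₀eq] at hIeq
    have h := hIeq
    nth_rewrite 2 [← add_zero (ENNReal.ofReal 4)] at h
    exact (ENNReal.add_right_inj ENNReal.ofReal_ne_top).mp h
  have hu₁ae : ∀ᵐ r ∂(volume.restrict (Ioi (0:ℝ))), u₁ r = 0 := by
    have hmeas2 : Measurable (fun r : ℝ => ENNReal.ofReal (u₁ r ^ 2 * r)) :=
      ENNReal.measurable_ofReal.comp ((hmeas.pow_const 2).mul measurable_id)
    rw [lintegral_eq_zero_iff hmeas2] at hJ
    filter_upwards [hJ, ae_restrict_mem measurableSet_Ioi] with r h0 hr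
    have hr0 : (0:ℝ) < r := hr
    have hle : u₁ r ^ 2 * r ≤ 0 := by
      have : ENNReal.ofReal (u₁ r ^ 2 * r) = 0 := h0
      rwa [ENNReal.ofReal_eq_zero] at this
    have h2 : u₁ r ^ 2 ≤ 0 := by
      by_contra h
      push_neg at h
      nlinarith
    have h3 : u₁ r ^ 2 = 0 := le_antisymm h2 (sq_nonneg _)
    exact pow_eq_zero_iff two_ne_zero |>.mp h3
  refine ⟨hu₁ae, ?_⟩
  -- real-integral facts about F₀
  have hnnF₀ : 0 ≤ᵐ[volume.restrict (Ioi (0:ℝ))]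
      (fun r => (deriv u₀ r ^ 2 + Real.sin (u₀ r) ^ 2 / r ^ 2) * r) := by
    rw [EventuallyLE, ae_restrict_iff' measurableSet_Ioi]
    apply ae_of_all
    intro r hr
    have hr0 : (0:ℝ) < r := hr
    have : (0:ℝ) ≤ (deriv u₀ r ^ 2 + Real.sin (u₀ r) ^ 2 / r ^ 2) * r :=
      mul_nonneg (by positivity) hr0.le
    exact this
  have hIntF₀ : IntegrableOn (fun r => (deriv u₀ r ^ 2 + Real.sin (u₀ r) ^ 2 / r ^ 2) * r)
      (Ioi (0:ℝ)) := by
    refine ⟨hF₀cont.aestronglyMeasurable measurableSet_Ioi, ?_⟩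
    rw [hasFiniteIntegral_iff_ofReal hnnF₀, hI₀eq]
    exact ENNReal.ofReal_lt_top
  have hIntEqF₀ : (∫ r in Ioi (0:ℝ), (deriv u₀ r ^ 2 + Real.sin (u₀ r) ^ 2 / r ^ 2) * r) = 4 := by
    have h := MeasureTheory.ofReal_integral_eq_lintegral_ofReal hIntF₀ hnnF₀
    rw [hI₀eq] at h
    have hnn : 0 ≤ ∫ r in Ioi (0:ℝ), (deriv u₀ r ^ 2 + Real.sin (u₀ r) ^ 2 / r ^ 2) * r :=
      integral_nonneg_of_ae hnnF₀
    exact (ENNReal.ofReal_eq_ofReal_iff hnn (by norm_num)).mp h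
  have hcontg : ContinuousOn (fun t => 2 * Real.sin (u₀ t) * deriv u₀ t) (Ioi (0:ℝ)) := by
    have hder : ContinuousOn (deriv u₀) (Ioi 0) :=
      hu₀.continuousOn_deriv_of_isOpen isOpen_Ioi le_rfl
    exact (continuousOn_const.mul
      ((Real.continuous_sin.comp_continuousOn hu₀.continuousOn))).mul hder
  have hkey : ∀ c d : ℝ, 0 < c → c ≤ d →
      (∫ t in c..d, ((deriv u₀ t ^ 2 + Real.sin (u₀ t) ^ 2 / t ^ 2) * t
          - 2 * Real.sin (u₀ t) * deriv u₀ t))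
        ≤ 4 - ((2 - 2 * Real.cos (u₀ d)) - (2 - 2 * Real.cos (u₀ c))) := by
    intro c d hc hcd
    have hsub : Icc c d ⊆ Ioi 0 := fun x hx => lt_of_lt_of_le hc hx.1
    have hint1 : IntervalIntegrable
        (fun t => (deriv u₀ t ^ 2 + Real.sin (u₀ t) ^ 2 / t ^ 2) * t) volume c d := by
      apply ContinuousOn.intervalIntegrable
      rw [uIcc_of_le hcd]
      exact hF₀cont.mono hsub
    have hint2 : IntervalIntegrable (fun t => 2 * Real.sin (u₀ t) * deriv u₀ t) volume c d := by
      apply ContinuousOn.intervalIntegrable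
      rw [uIcc_of_le hcd]
      exact hcontg.mono hsub
    rw [intervalIntegral.integral_sub hint1 hint2, FTC_interval u₀ hu₀ hc hcd]
    have h1 : (∫ t in c..d, (deriv u₀ t ^ 2 + Real.sin (u₀ t) ^ 2 / t ^ 2) * t) ≤ 4 := by
      rw [intervalIntegral.integral_of_le hcd, ← hIntEqF₀]
      apply setIntegral_mono_set hIntF₀ hnnF₀
      exact HasSubset.Subset.eventuallyLE (fun x hx => lt_of_lt_of_le hc hx.1.le)
    linarith
  -- the quadratic defect D vanishes on Ioi 0
  have hDnn : ∀ t : ℝ, t ∈ Ioi (0:ℝ) → 0 ≤ (deriv u₀ t ^ 2 + Real.sin (u₀ t) ^ 2 / t ^ 2) * t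
      - 2 * Real.sin (u₀ t) * deriv u₀ t := by
    intro t ht
    have := pointwise_ineq (φ := deriv u₀ t) (s := Real.sin (u₀ t)) (t := t) ht
    linarith
  have hDcont : ContinuousOn (fun t => (deriv u₀ t ^ 2 + Real.sin (u₀ t) ^ 2 / t ^ 2) * t
      - 2 * Real.sin (u₀ t) * deriv u₀ t) (Ioi (0:ℝ)) := hF₀cont.sub hcontg
  have hDzero : ∀ t : ℝ, t ∈ Ioi (0:ℝ) → (deriv u₀ t ^ 2 + Real.sin (u₀ t) ^ 2 / t ^ 2) * t
      - 2 * Real.sin (u₀ t) * deriv u₀ t = 0 := by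
    set D : ℝ → ℝ := fun t => (deriv u₀ t ^ 2 + Real.sin (u₀ t) ^ 2 / t ^ 2) * t
      - 2 * Real.sin (u₀ t) * deriv u₀ t with hDdef
    by_contra hcon
    push_neg at hcon
    obtain ⟨t₁, ht₁, hne⟩ := hcon
    have ht₁0 : (0:ℝ) < t₁ := ht₁
    have hpos : 0 < D t₁ := lt_of_le_of_ne (hDnn t₁ ht₁) (Ne.symm hne)
    have hca : ContinuousAt D t₁ := hDcont.continuousAt (Ioi_mem_nhds ht₁0)
    have hev1 : ∀ᶠ x in nhds t₁, D t₁ / 2 < D x :=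
      hca.eventually (eventually_gt_nhds (half_lt_self hpos))
    obtain ⟨δ, hδ, hball⟩ := Metric.eventually_nhds_iff.mp hev1
    set ε : ℝ := min (δ / 2) (t₁ / 2) with hεdef
    have hε : 0 < ε := lt_min (by linarith) (by linarith)
    have hεδ : ε < δ := lt_of_le_of_lt (min_le_left _ _) (by linarith)
    have hεt : ε ≤ t₁ / 2 := min_le_right _ _
    have hlo : 0 < t₁ - ε := by linarith
    have hDbig : ∀ x ∈ Icc (t₁ - ε) (t₁ + ε), D t₁ / 2 ≤ D x := by
      intro x hx
      apply le_of_lt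
      apply hball
      have h1 := hx.1
      have h2 := hx.2
      rw [Real.dist_eq, abs_lt]
      constructor <;> linarith
    have hsubI : Icc (t₁ - ε) (t₁ + ε) ⊆ Ioi (0:ℝ) := fun x hx => lt_of_lt_of_le hlo hx.1
    have hintD : IntervalIntegrable D volume (t₁ - ε) (t₁ + ε) := by
      apply ContinuousOn.intervalIntegrable
      rw [uIcc_of_le (by linarith)]
      exact hDcont.mono hsubI
    have hδ' : ε * D t₁ ≤ ∫ t in (t₁ - ε)..(t₁ + ε), D t := by
      have hconst : (∫ _ in (t₁ - ε)..(t₁ + ε), (D t₁ / 2)) = (2 * ε) * (D t₁ / 2) := by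
        rw [intervalIntegral.integral_const, smul_eq_mul]
        ring_nf
      calc ε * D t₁ = (2 * ε) * (D t₁ / 2) := by ring
        _ = ∫ _ in (t₁ - ε)..(t₁ + ε), (D t₁ / 2) := hconst.symm
        _ ≤ ∫ t in (t₁ - ε)..(t₁ + ε), D t := by
            apply intervalIntegral.integral_mono_on (by linarith)
              intervalIntegrable_const hintD hDbig
    -- sequences
    have ha_tend : Tendsto (fun n : ℕ => 1 / ((n:ℝ) + 1)) atTop
        (nhdsWithin (0:ℝ) (Ioi 0)) := by
      rw [tendsto_nhdsWithin_iff]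
      exact ⟨tendsto_one_div_add_atTop_nhds_zero_nat,
        Eventually.of_forall fun n => mem_Ioi.mpr (by positivity)⟩
    have hb_tend : Tendsto (fun n : ℕ => (n:ℝ) + 1) atTop atTop :=
      tendsto_atTop_add_const_right _ 1 tendsto_natCast_atTop_atTop
    have hstend : Tendsto (fun n : ℕ => 4 - ((2 - 2 * Real.cos (u₀ ((n:ℝ)+1)))
        - (2 - 2 * Real.cos (u₀ (1/((n:ℝ)+1)))))) atTop (nhds 0) := by
      have h1 := (g_limtop u₀ hliminf).comp hb_tend
      have h2 := (g_lim0 u₀ hlim0).comp ha_tend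
      have h3 := (tendsto_const_nhds (x := (4:ℝ)) (f := atTop)).sub (h1.sub h2)
      simpa using h3
    have hevle : ∀ᶠ n : ℕ in atTop, ε * D t₁ ≤ 4 - ((2 - 2 * Real.cos (u₀ ((n:ℝ)+1)))
        - (2 - 2 * Real.cos (u₀ (1/((n:ℝ)+1))))) := by
      have hc_small : ∀ᶠ n : ℕ in atTop, 1/((n:ℝ)+1) < t₁ - ε := by
        apply Tendsto.eventually_lt_const hlo
        exact tendsto_one_div_add_atTop_nhds_zero_nat
      have hd_big : ∀ᶠ n : ℕ in atTop, t₁ + ε ≤ (n:ℝ) + 1 := hb_tend.eventually_ge_atTop _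
      filter_upwards [hc_small, hd_big] with n h1 h2
      set c := 1/((n:ℝ)+1) with hcdef
      have hc0 : 0 < c := by positivity
      have hc1 : c ≤ t₁ - ε := h1.le
      have hcd : c ≤ (n:ℝ) + 1 := by linarith
      have int1 : IntervalIntegrable D volume c (t₁ - ε) := by
        apply ContinuousOn.intervalIntegrable
        rw [uIcc_of_le hc1]
        exact hDcont.mono (fun x hx => lt_of_lt_of_le hc0 hx.1)
      have int3 : IntervalIntegrable D volume (t₁ + ε) ((n:ℝ)+1) := by
        apply ContinuousOn.intervalIntegrable
        rw [uIcc_of_le h2]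
        exact hDcont.mono (fun x hx => lt_of_lt_of_le (by linarith : (0:ℝ) < t₁ + ε) hx.1)
      have hsplit2 : (∫ t in c..((n:ℝ)+1), D t)
          = (∫ t in c..(t₁ - ε), D t) + (∫ t in (t₁ - ε)..(t₁ + ε), D t)
            + ∫ t in (t₁ + ε)..((n:ℝ)+1), D t := by
        rw [intervalIntegral.integral_add_adjacent_intervals int1 hintD,
          intervalIntegral.integral_add_adjacent_intervals (int1.trans hintD) int3]
      have hnn1 : 0 ≤ ∫ t in c..(t₁ - ε), D t :=
        intervalIntegral.integral_nonneg hc1 (fun x hx => hDnn x (lt_of_lt_of_le hc0 hx.1))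
      have hnn3 : 0 ≤ ∫ t in (t₁ + ε)..((n:ℝ)+1), D t :=
        intervalIntegral.integral_nonneg h2
          (fun x hx => hDnn x (lt_of_lt_of_le (by linarith : (0:ℝ) < t₁ + ε) hx.1))
      have := hkey c ((n:ℝ)+1) hc0 hcd
      have hDle : (∫ t in c..((n:ℝ)+1), D t)
          ≤ 4 - ((2 - 2 * Real.cos (u₀ ((n:ℝ)+1))) - (2 - 2 * Real.cos (u₀ c))) := this
      calc ε * D t₁ ≤ ∫ t in (t₁ - ε)..(t₁ + ε), D t := hδ'
        _ ≤ ∫ t in c..((n:ℝ)+1), D t := by rw [hsplit2]; linarith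
        _ ≤ _ := hDle
    have hfinal := ge_of_tendsto hstend hevle
    nlinarith
  -- the ODE `u₀' = sin u₀ / r`
  have hODE : ∀ t : ℝ, 0 < t → HasDerivAt u₀ (Real.sin (u₀ t) / t) t := by
    intro t ht
    have hd : HasDerivAt u₀ (deriv u₀ t) t :=
      ((hu₀.differentiableOn one_ne_zero t ht).differentiableAt (Ioi_mem_nhds ht)).hasDerivAt
    have hDt := hDzero t ht
    have hfact : deriv u₀ t = Real.sin (u₀ t) / t := by
      have hid := pointwise_id (φ := deriv u₀ t) (s := Real.sin (u₀ t)) ht.ne'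
      have h2 : (t * deriv u₀ t - Real.sin (u₀ t)) ^ 2 / t = 0 := by
        rw [← hid, hDt]
      have h3 : (t * deriv u₀ t - Real.sin (u₀ t)) ^ 2 = 0 := by
        rcases div_eq_zero_iff.mp h2 with h | h
        · exact h
        · exact absurd h ht.ne'
      have h4 : t * deriv u₀ t - Real.sin (u₀ t) = 0 := pow_eq_zero_iff two_ne_zero |>.mp h3
      field_simp
      linarith
    rwa [← hfact]
  -- `sin (u₀ t)` never vanishes on `(0,∞)`
  have hsin_ne : ∀ t : ℝ, 0 < t → Real.sin (u₀ t) ≠ 0 := by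
    intro t ht hsin
    have hconst : ∀ r : ℝ, 0 < r → u₀ r = u₀ t := by
      intro r hr
      refine ode_unique hODE (g := fun _ => u₀ t) ?_ ht rfl hr
      intro s hs
      have : Real.sin (u₀ t) / s = 0 := by rw [hsin, zero_div]
      simpa [this] using hasDerivAt_const s (u₀ t)
    have h1 : u₀ t = Real.pi := by
      refine tendsto_nhds_unique ?_ hliminf
      apply Tendsto.congr' ?_ (tendsto_const_nhds (x := u₀ t))
      filter_upwards [eventually_gt_atTop 0] with r hr
      exact (hconst r hr).symm
    have h2 : u₀ t = 0 := by
      refine tendsto_nhds_unique ?_ hlim0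
      apply Tendsto.congr' ?_ (tendsto_const_nhds (x := u₀ t))
      filter_upwards [self_mem_nhdsWithin] with r hr
      exact (hconst r hr).symm
    rw [h1] at h2
    exact Real.pi_ne_zero h2
  -- range of u₀
  have hrange : ∀ t : ℝ, 0 < t → u₀ t ∈ Ioo 0 Real.pi := by
    intro t ht
    have hπ := Real.pi_pos
    constructor
    · by_contra h
      push_neg at h
      have hlt : u₀ t < 0 := lt_of_le_of_ne h
        (fun h0 => hsin_ne t ht (by rw [h0, Real.sin_zero]))
      have hev : ∀ᶠ r in atTop, Real.pi / 2 < u₀ r :=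
        hliminf.eventually_const_lt (by linarith)
      obtain ⟨t₂, ht₂, hgt⟩ := ((eventually_ge_atTop (t + 1)).and hev).exists
      have htt₂ : t ≤ t₂ := by linarith
      have hcont' : ContinuousOn u₀ (Icc t t₂) :=
        hu₀.continuousOn.mono (fun x hx => lt_of_lt_of_le ht hx.1)
      have hmem : (0:ℝ) ∈ Icc (u₀ t) (u₀ t₂) := ⟨hlt.le, by linarith⟩
      obtain ⟨t₃, ht₃, h0⟩ := intermediate_value_Icc htt₂ hcont' hmem
      exact hsin_ne t₃ (lt_of_lt_of_le ht ht₃.1) (by rw [h0, Real.sin_zero])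
    · by_contra h
      push_neg at h
      have hlt : Real.pi < u₀ t := lt_of_le_of_ne h
        (fun h0 => hsin_ne t ht (by rw [← h0, Real.sin_pi]))
      have hev : ∀ᶠ r in nhdsWithin (0:ℝ) (Ioi 0), u₀ r < Real.pi / 2 :=
        hlim0.eventually_lt_const (by linarith)
      have hev2 : ∀ᶠ r in nhdsWithin (0:ℝ) (Ioi 0), r < t :=
        eventually_nhdsWithin_of_eventually_nhds (eventually_lt_nhds ht)
      have hev3 : ∀ᶠ r in nhdsWithin (0:ℝ) (Ioi 0), r ∈ Ioi (0:ℝ) := self_mem_nhdsWithin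
      obtain ⟨t₂, h1, h2, h3⟩ := (hev.and (hev2.and hev3)).exists
      have ht₂0 : (0:ℝ) < t₂ := h3
      have hcont' : ContinuousOn u₀ (Icc t₂ t) :=
        hu₀.continuousOn.mono (fun x hx => lt_of_lt_of_le ht₂0 hx.1)
      have hmem : Real.pi ∈ Icc (u₀ t₂) (u₀ t) := ⟨by linarith, hlt.le⟩
      obtain ⟨t₃, ht₃, h0⟩ := intermediate_value_Icc h2.le hcont' hmem
      exact hsin_ne t₃ (lt_of_lt_of_le ht₂0 ht₃.1) (by rw [h0, Real.sin_pi])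
  -- construct the scaling parameter
  obtain ⟨hθ1, hθ2⟩ := hrange 1 one_pos
  have hθhalf : 0 < u₀ 1 / 2 := by linarith
  have hθhalf2 : u₀ 1 / 2 < Real.pi / 2 := by linarith
  have htanpos : 0 < Real.tan (u₀ 1 / 2) :=
    Real.tan_pos_of_pos_of_lt_pi_div_two hθhalf hθhalf2
  have hl : (0:ℝ) < 1 / Real.tan (u₀ 1 / 2) := by positivity
  refine ⟨1 / Real.tan (u₀ 1 / 2), hl, ?_⟩
  intro r hr
  have hQd : ∀ t : ℝ, 0 < t →
      HasDerivAt (fun x : ℝ => 2 * Real.arctan (x / (1 / Real.tan (u₀ 1 / 2))))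
        (Real.sin ((fun x : ℝ => 2 * Real.arctan (x / (1 / Real.tan (u₀ 1 / 2)))) t) / t) t :=
    fun t ht => Q_hasDeriv hl ht
  refine ode_unique hODE hQd one_pos ?_ hr
  show u₀ 1 = 2 * Real.arctan (1 / (1 / Real.tan (u₀ 1 / 2)))
  rw [one_div_one_div, Real.arctan_tan (by linarith) hθhalf2]
  ring

/-- The energy `E(u₀,u₁) = π·∫₀^∞ (u₁² + (∂_r u₀)² + sin²(u₀)/r²) r dr` of a degree-one
pair is at least `4π`, with equality iff `u₁ = 0` a.e. and `u₀` is a rescaled harmonic map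
`Q_λ(r) = 2 arctan(r/λ)`. -/
theorem stmt_0 (u₀ u₁ : ℝ → ℝ)
    (hu₀ : ContDiffOn ℝ 1 u₀ (Ioi (0:ℝ)))
    (hlim0 : Tendsto u₀ (nhdsWithin (0:ℝ) (Ioi 0)) (nhds 0))
    (hliminf : Tendsto u₀ atTop (nhds Real.pi))
    (hmeas : Measurable u₁)
    (E : ℝ≥0∞)
    (hE : E = ENNReal.ofReal Real.pi *
      ∫⁻ r in Ioi (0:ℝ), ENNReal.ofReal
        (((u₁ r) ^ 2 + (deriv u₀ r) ^ 2 + (Real.sin (u₀ r)) ^ 2 / r ^ 2) * r))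
    (hfin : E < ⊤) :
    ENNReal.ofReal (4 * Real.pi) ≤ E ∧
      (E = ENNReal.ofReal (4 * Real.pi) ↔
        ((∀ᵐ r ∂(volume.restrict (Ioi (0:ℝ))), u₁ r = 0) ∧
          ∃ l : ℝ, 0 < l ∧ ∀ r : ℝ, 0 < r → u₀ r = 2 * Real.arctan (r / l))) := by
  have hπ : (0:ℝ) < Real.pi := Real.pi_pos
  have hI₀I : (∫⁻ r in Ioi (0:ℝ),
        ENNReal.ofReal ((deriv u₀ r ^ 2 + Real.sin (u₀ r) ^ 2 / r ^ 2) * r))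
      ≤ ∫⁻ r in Ioi (0:ℝ), ENNReal.ofReal
        (((u₁ r) ^ 2 + (deriv u₀ r) ^ 2 + (Real.sin (u₀ r)) ^ 2 / r ^ 2) * r) := by
    apply lintegral_mono_ae
    rw [ae_restrict_iff' measurableSet_Ioi]
    apply ae_of_all
    intro r hr
    have hr0 : (0:ℝ) < r := hr
    apply ENNReal.ofReal_le_ofReal
    nlinarith [sq_nonneg (u₁ r)]
  have h4I : ENNReal.ofReal 4 ≤ ∫⁻ r in Ioi (0:ℝ), ENNReal.ofReal
      (((u₁ r) ^ 2 + (deriv u₀ r) ^ 2 + (Real.sin (u₀ r)) ^ 2 / r ^ 2) * r) :=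
    le_trans (lower_bound u₀ hu₀ hlim0 hliminf) hI₀I
  have hprod : ENNReal.ofReal (4 * Real.pi) = ENNReal.ofReal Real.pi * ENNReal.ofReal 4 := by
    rw [← ENNReal.ofReal_mul hπ.le]
    ring_nf
  refine ⟨?_, ?_, ?_⟩
  · rw [hE, hprod]
    exact mul_le_mul_right h4I _
  · intro heq
    have hIeq : (∫⁻ r in Ioi (0:ℝ), ENNReal.ofReal
        (((u₁ r) ^ 2 + (deriv u₀ r) ^ 2 + (Real.sin (u₀ r)) ^ 2 / r ^ 2) * r))
        = ENNReal.ofReal 4 := by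
      rw [hE, hprod] at heq
      exact (ENNReal.mul_right_inj (ENNReal.ofReal_pos.mpr hπ).ne' ENNReal.ofReal_ne_top).mp heq
    exact equality_case u₀ u₁ hu₀ hlim0 hliminf hmeas hIeq
  · rintro ⟨hae, l, hl, hQ⟩
    rw [hE, converse_value u₀ u₁ hae hl hQ, hprod]
end

section
/- There exist absolute constants κ > 0 and C > 0 with the following property: for each c > 0 and R > 0 there exists a function q : (0,∞) → ℝ of class C³ whose third derivative is locally Lipschitz, such that: (P1) q(r) = r²/2 for all r ≤ R; (P2) q is constant on the set {r ≥ κ·e^{κ/c}·R}; (P3) |q'(r)| ≤ C·r and |q''(r)| ≤ C for all r > 0; (P4) q''(r) ≥ −c and q'(r)/r ≥ −c for all r > 0; (P5) the radial bilaplacian satisfies Δ²q(r) ≤ c·r^{−2} at almost every r > 0, where Δq(r) = q''(r) + q'(r)/r; (P6) |r·((q'(r)/r))'| ≤ c for all r > 0. -/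
open Set MeasureTheory Asymptotics Filter

noncomputable def mfun (t : ℝ) : ℝ := max (t - t^2) 0

lemma mfun_nonneg (t : ℝ) : 0 ≤ mfun t := le_max_right _ _

lemma mfun_le (t : ℝ) : mfun t ≤ 1/4 :=
  max_le (by nlinarith [sq_nonneg (t - 1/2)]) (by norm_num)

lemma mfun_eq_zero {t : ℝ} (h : t ≤ 0 ∨ 1 ≤ t) : mfun t = 0 :=
  max_eq_right (by rcases h with h|h <;> nlinarith)

lemma mfun_eq {t : ℝ} (h0 : 0 ≤ t) (h1 : t ≤ 1) : mfun t = t - t^2 :=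
  max_eq_left (by nlinarith)

lemma continuous_mfun : Continuous mfun :=
  (continuous_id.sub (continuous_pow 2)).max continuous_const

lemma hasDerivAt_g (x : ℝ) : HasDerivAt (fun t : ℝ => t - t^2) (1 - 2*x) x := by
  have := (hasDerivAt_id x).sub (hasDerivAt_pow 2 x)
  exact this.congr_deriv (by norm_num)

/-- junction case : derivative of mfun^n is 0 where t - t² = 0, n ≥ 2 -/
lemma hasDerivAt_mfun_pow_zero {x : ℝ} (hx : x - x^2 = 0) {n : ℕ} (hn : 2 ≤ n) :
    HasDerivAt (fun t => mfun t ^ n) 0 x := by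
  have hmx : mfun x = 0 := by unfold mfun; rw [hx]; simp
  rw [hasDerivAt_iff_isLittleO]
  have h0 : (fun t => mfun t ^ n - mfun x ^ n - (t - x) • (0:ℝ)) = fun t => mfun t ^ n := by
    funext t
    simp [hmx, zero_pow (by omega : n ≠ 0)]
  rw [h0]
  have h1 : (fun t : ℝ => t - t^2) =O[nhds x] (fun t => t - x) := by
    have := (hasDerivAt_g x).isBigO_sub
    simpa [hx] using this
  have h2 : (fun t : ℝ => mfun t ^ n) =O[nhds x] (fun t => (t - x)^n) := by
    refine (IsBigO.of_bound 1 ?_).trans (h1.pow n)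
    filter_upwards with t
    have h3 : |mfun t| ≤ |t - t^2| := by
      rw [abs_of_nonneg (mfun_nonneg t)]
      exact max_le (le_abs_self _) (abs_nonneg _)
    simp only [norm_pow, Real.norm_eq_abs, one_mul]
    exact pow_le_pow_left₀ (abs_nonneg _) h3 n
  refine h2.trans_isLittleO ?_
  -- (t - x)^n =o (t - x)
  have h4 : Tendsto (fun t : ℝ => (t - x)^(n-1)) (nhds x) (nhds 0) := by
    have h : Tendsto (fun t : ℝ => t - x) (nhds x) (nhds (x - x)) :=
      Filter.Tendsto.sub_const tendsto_id x
    rw [sub_self] at h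
    have := h.pow (n-1)
    simpa [zero_pow (show n-1 ≠ 0 by omega)] using this
  have h5 : (fun t : ℝ => (t - x)^(n-1)) =o[nhds x] (fun _ => (1:ℝ)) :=
    (isLittleO_one_iff ℝ).mpr h4
  have h6 := h5.mul_isBigO (isBigO_refl (fun t : ℝ => t - x) (nhds x))
  refine h6.congr' ?_ ?_
  · filter_upwards with t
    rw [← pow_succ]
    congr 1
    omega
  · filter_upwards with t; simp

lemma hasDerivAt_mfun_pow {x : ℝ} {n : ℕ} (hn : 2 ≤ n) :
    HasDerivAt (fun t => mfun t ^ n) (n * mfun x ^ (n-1) * (1 - 2*x)) x := by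
  rcases lt_trichotomy (x - x^2) 0 with h|h|h
  · -- locally zero
    have hev : (fun t => mfun t ^ n) =ᶠ[nhds x] (fun _ => (0:ℝ)) := by
      have hcont : Continuous (fun t : ℝ => t - t^2) := continuous_id.sub (continuous_pow 2)
      filter_upwards [hcont.continuousAt.eventually_lt continuousAt_const h] with t ht
      rw [show mfun t = 0 from max_eq_right ht.le, zero_pow (by omega : n ≠ 0)]
    have hmx : mfun x = 0 := max_eq_right h.le
    have : HasDerivAt (fun _ : ℝ => (0:ℝ)) 0 x := hasDerivAt_const x 0
    have h2 := this.congr_of_eventuallyEq hev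
    simpa [hmx, zero_pow (show n - 1 ≠ 0 by omega)] using h2
  · have hmx : mfun x = 0 := max_eq_right h.le
    have := hasDerivAt_mfun_pow_zero h hn
    simpa [hmx, zero_pow (show n - 1 ≠ 0 by omega)] using this
  · -- locally equal to (t - t^2)^n
    have hcont : Continuous (fun t : ℝ => t - t^2) := continuous_id.sub (continuous_pow 2)
    have hev : (fun t => mfun t ^ n) =ᶠ[nhds x] (fun t => (t - t^2) ^ n) := by
      filter_upwards [continuousAt_const.eventually_lt hcont.continuousAt h] with t ht
      rw [show mfun t = t - t^2 from max_eq_left ht.le]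
    have hd : HasDerivAt (fun t : ℝ => (t - t^2) ^ n)
        ((n : ℝ) * (x - x^2) ^ (n-1) * (1 - 2*x)) x := by
      have := (hasDerivAt_g x).pow n
      exact this
    have h2 := hd.congr_of_eventuallyEq hev
    have hmx : mfun x = x - x^2 := max_eq_left h.le
    rw [hmx]
    exact h2

noncomputable def kfun (t : ℝ) : ℝ := 140 * mfun t ^ 3
noncomputable def kfun1 (t : ℝ) : ℝ := 420 * mfun t ^ 2 * (1 - 2*t)
noncomputable def kfun2 (t : ℝ) : ℝ := 840 * (mfun t * (1 - 2*t)^2 - mfun t ^ 2)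

lemma continuous_kfun : Continuous kfun := continuous_const.mul (continuous_mfun.pow 3)
lemma continuous_kfun1 : Continuous kfun1 :=
  (continuous_const.mul (continuous_mfun.pow 2)).mul
    (continuous_const.sub (continuous_const.mul continuous_id))
lemma continuous_kfun2 : Continuous kfun2 :=
  continuous_const.mul ((continuous_mfun.mul (((continuous_const.sub
    (continuous_const.mul continuous_id)).pow 2))).sub (continuous_mfun.pow 2))

lemma hasDerivAt_kfun (x : ℝ) : HasDerivAt kfun (kfun1 x) x := by
  have := (hasDerivAt_mfun_pow (x := x) (n := 3) (by norm_num)).const_mul 140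
  refine this.congr_deriv ?_
  unfold kfun1; push_cast; ring

lemma hasDerivAt_kfun1 (x : ℝ) : HasDerivAt kfun1 (kfun2 x) x := by
  have h1 := (hasDerivAt_mfun_pow (x := x) (n := 2) (by norm_num)).const_mul 420
  have h2 : HasDerivAt (fun t : ℝ => 1 - 2*t) (-2) x := by
    exact ((hasDerivAt_const x (1:ℝ)).sub ((hasDerivAt_id x).const_mul 2)).congr_deriv (by norm_num)
  have := h1.mul h2
  refine this.congr_deriv ?_
  unfold kfun2; push_cast; ring

lemma kfun_nonneg (t : ℝ) : 0 ≤ kfun t := by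
  have := mfun_nonneg t; unfold kfun; positivity

lemma kfun_le (t : ℝ) : kfun t ≤ 35/16 := by
  have h1 := mfun_nonneg t; have h2 := mfun_le t
  have h3 : mfun t ^ 3 ≤ (1/4:ℝ)^3 := pow_le_pow_left₀ h1 h2 3
  unfold kfun; nlinarith

lemma abs_kfun1_le (t : ℝ) : |kfun1 t| ≤ 105/4 := by
  unfold kfun1
  rcases le_or_gt t 0 with h|h
  · rw [mfun_eq_zero (Or.inl h)]; norm_num
  rcases le_or_gt 1 t with h1|h1
  · rw [mfun_eq_zero (Or.inr h1)]; norm_num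
  have hm0 := mfun_nonneg t; have hm4 := mfun_le t
  rw [abs_le]
  constructor <;> nlinarith [sq_nonneg (mfun t)]

lemma abs_kfun2_le (t : ℝ) : |kfun2 t| ≤ 210 := by
  unfold kfun2
  rcases le_or_gt t 0 with h|h
  · rw [mfun_eq_zero (Or.inl h)]; norm_num
  rcases le_or_gt 1 t with h1|h1
  · rw [mfun_eq_zero (Or.inr h1)]; norm_num
  have hm0 := mfun_nonneg t; have hm4 := mfun_le t
  have hg : (1 - 2*t)^2 ≤ 1 := by nlinarith
  have hg0 : 0 ≤ (1 - 2*t)^2 := sq_nonneg _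
  rw [abs_le]
  constructor <;> nlinarith [sq_nonneg (mfun t)]

noncomputable def Gfun (x : ℝ) : ℝ := ∫ t in (0:ℝ)..x, kfun t

lemma hasDerivAt_Gfun (x : ℝ) : HasDerivAt Gfun (kfun x) x :=
  (continuous_kfun.integral_hasStrictDerivAt 0 x).hasDerivAt

lemma continuous_Gfun : Continuous Gfun := by
  rw [continuous_iff_continuousAt]
  exact fun x => (hasDerivAt_Gfun x).continuousAt

lemma Gfun_of_nonpos {x : ℝ} (h : x ≤ 0) : Gfun x = 0 := by
  unfold Gfun
  rw [intervalIntegral.integral_congr (g := fun _ => (0:ℝ)) ?_, intervalIntegral.integral_const]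
  · simp
  · intro t ht
    rw [uIcc_of_ge h] at ht
    exact by rw [show kfun t = 140 * mfun t ^3 from rfl, mfun_eq_zero (Or.inl ht.2)]; ring

lemma Gfun_one : Gfun 1 = 1 := by
  unfold Gfun
  rw [intervalIntegral.integral_congr (g := fun t => 140*(t - t^2)^3) ?_]
  · have h : ∀ t ∈ uIcc (0:ℝ) 1, HasDerivAt
        (fun t : ℝ => 35*t^4 - 84*t^5 + 70*t^6 - 20*t^7) (140*(t - t^2)^3) t := by
      intro t _
      have h4 := (hasDerivAt_pow 4 t).const_mul (35:ℝ)
      have h5 := (hasDerivAt_pow 5 t).const_mul (84:ℝ)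
      have h6 := (hasDerivAt_pow 6 t).const_mul (70:ℝ)
      have h7 := (hasDerivAt_pow 7 t).const_mul (20:ℝ)
      have := ((h4.sub h5).add h6).sub h7
      refine this.congr_deriv ?_
      push_cast; ring
    rw [intervalIntegral.integral_eq_sub_of_hasDerivAt h
      (Continuous.intervalIntegrable (by continuity) _ _)]
    norm_num
  · intro t ht
    rw [uIcc_of_le (by norm_num : (0:ℝ) ≤ 1)] at ht
    rw [show kfun t = 140 * mfun t ^3 from rfl, mfun_eq ht.1 ht.2]

lemma Gfun_of_one_le {x : ℝ} (h : 1 ≤ x) : Gfun x = 1 := by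
  have hadd : Gfun 1 + ∫ t in (1:ℝ)..x, kfun t = Gfun x :=
    intervalIntegral.integral_add_adjacent_intervals
      (continuous_kfun.intervalIntegrable _ _) (continuous_kfun.intervalIntegrable _ _)
  have hz : ∫ t in (1:ℝ)..x, kfun t = 0 := by
    rw [intervalIntegral.integral_congr (g := fun _ => (0:ℝ)) ?_]
    · simp
    · intro t ht
      rw [uIcc_of_le h] at ht
      rw [show kfun t = 140 * mfun t ^3 from rfl, mfun_eq_zero (Or.inr ht.1)]; ring
  rw [← hadd, hz, Gfun_one]; ring

lemma Gfun_nonneg (x : ℝ) : 0 ≤ Gfun x := by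
  rcases le_or_gt x 0 with h|h
  · rw [Gfun_of_nonpos h]
  · exact intervalIntegral.integral_nonneg h.le (fun t _ => kfun_nonneg t)

lemma Gfun_le_one (x : ℝ) : Gfun x ≤ 1 := by
  rcases le_or_gt x 0 with h|h
  · rw [Gfun_of_nonpos h]; norm_num
  rcases le_or_gt 1 x with h1|h1
  · rw [Gfun_of_one_le h1]
  have hadd : Gfun x + ∫ t in x..(1:ℝ), kfun t = Gfun 1 :=
    intervalIntegral.integral_add_adjacent_intervals
      (continuous_kfun.intervalIntegrable _ _) (continuous_kfun.intervalIntegrable _ _)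
  have hnn : 0 ≤ ∫ t in x..(1:ℝ), kfun t :=
    intervalIntegral.integral_nonneg h1.le (fun t _ => kfun_nonneg t)
  rw [Gfun_one] at hadd
  linarith

noncomputable def ffun (A t : ℝ) : ℝ := 1 - Gfun (A * t)
noncomputable def ffun1 (A t : ℝ) : ℝ := -(kfun (A * t) * A)
noncomputable def ffun2 (A t : ℝ) : ℝ := -(kfun1 (A * t) * A * A)
noncomputable def ffun3 (A t : ℝ) : ℝ := -(kfun2 (A * t) * A * A * A)

lemma hasDerivAt_mulA (A t : ℝ) : HasDerivAt (fun s : ℝ => A * s) A t := by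
  simpa using (hasDerivAt_id t).const_mul A

lemma hasDerivAt_ffun (A t : ℝ) : HasDerivAt (ffun A) (ffun1 A t) t := by
  have h := (hasDerivAt_Gfun (A * t)).comp t (hasDerivAt_mulA A t)
  have h2 := (hasDerivAt_const t (1:ℝ)).sub h
  exact h2.congr_deriv (by simp [ffun1])

lemma hasDerivAt_ffun1 (A t : ℝ) : HasDerivAt (ffun1 A) (ffun2 A t) t := by
  have h := ((hasDerivAt_kfun (A * t)).comp t (hasDerivAt_mulA A t)).mul_const A
  have h2 := h.neg
  have he : (fun t => -((kfun ∘ fun s => A * s) t * A)) = ffun1 A := by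
    funext s; simp [ffun1, Function.comp]
  exact h2

lemma hasDerivAt_ffun2 (A t : ℝ) : HasDerivAt (ffun2 A) (ffun3 A t) t := by
  have h := (((hasDerivAt_kfun1 (A * t)).comp t (hasDerivAt_mulA A t)).mul_const A).mul_const A
  have h2 := h.neg
  have he : (fun t => -((kfun1 ∘ fun s => A * s) t * A * A)) = ffun2 A := by
    funext s; simp [ffun2, Function.comp]
  exact h2

lemma continuous_ffun (A : ℝ) : Continuous (ffun A) :=
  continuous_const.sub (continuous_Gfun.comp (continuous_const.mul continuous_id))
lemma continuous_ffun1 (A : ℝ) : Continuous (ffun1 A) :=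
  (((continuous_kfun.comp (continuous_const.mul continuous_id)).mul continuous_const)).neg
lemma continuous_ffun2 (A : ℝ) : Continuous (ffun2 A) :=
  ((((continuous_kfun1.comp (continuous_const.mul continuous_id)).mul
    continuous_const)).mul continuous_const).neg

lemma contDiff_one_kfun : ContDiff ℝ 1 kfun := by
  rw [contDiff_one_iff_deriv]
  refine ⟨fun x => (hasDerivAt_kfun x).differentiableAt, ?_⟩
  have : deriv kfun = kfun1 := funext fun x => (hasDerivAt_kfun x).deriv
  rw [this]; exact continuous_kfun1

lemma contDiff_one_kfun1 : ContDiff ℝ 1 kfun1 := by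
  rw [contDiff_one_iff_deriv]
  refine ⟨fun x => (hasDerivAt_kfun1 x).differentiableAt, ?_⟩
  have : deriv kfun1 = kfun2 := funext fun x => (hasDerivAt_kfun1 x).deriv
  rw [this]; exact continuous_kfun2

lemma contDiff_one_ffun1 (A : ℝ) : ContDiff ℝ 1 (ffun1 A) :=
  (((contDiff_one_kfun.comp (contDiff_const.mul contDiff_id)).mul contDiff_const)).neg
lemma contDiff_one_ffun2 (A : ℝ) : ContDiff ℝ 1 (ffun2 A) :=
  ((((contDiff_one_kfun1.comp (contDiff_const.mul contDiff_id)).mul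
    contDiff_const)).mul contDiff_const).neg

lemma ffun_nonneg (A t : ℝ) : 0 ≤ ffun A t := by
  have := Gfun_le_one (A * t); unfold ffun; linarith
lemma ffun_le_one (A t : ℝ) : ffun A t ≤ 1 := by
  have := Gfun_nonneg (A * t); unfold ffun; linarith
lemma ffun_eq_one {A t : ℝ} (h : A * t ≤ 0) : ffun A t = 1 := by
  unfold ffun; rw [Gfun_of_nonpos h]; ring
lemma ffun_eq_zero {A t : ℝ} (h : 1 ≤ A * t) : ffun A t = 0 := by
  unfold ffun; rw [Gfun_of_one_le h]; ring

lemma abs_ffun1_le {A : ℝ} (hA : 0 ≤ A) (t : ℝ) : |ffun1 A t| ≤ 35/16 * A := by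
  unfold ffun1
  rw [abs_neg, abs_mul, abs_of_nonneg hA]
  have h1 : |kfun (A*t)| ≤ 35/16 := by
    rw [abs_of_nonneg (kfun_nonneg _)]; exact kfun_le _
  exact mul_le_mul_of_nonneg_right h1 hA

lemma abs_ffun2_le {A : ℝ} (hA : 0 ≤ A) (t : ℝ) : |ffun2 A t| ≤ 105/4 * A^2 := by
  unfold ffun2
  rw [abs_neg, abs_mul, abs_mul, abs_of_nonneg hA]
  calc |kfun1 (A*t)| * A * A ≤ 105/4 * A * A :=
        mul_le_mul_of_nonneg_right (mul_le_mul_of_nonneg_right (abs_kfun1_le _) hA) hA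
    _ = 105/4 * A^2 := by ring

lemma abs_ffun3_le {A : ℝ} (hA : 0 ≤ A) (t : ℝ) : |ffun3 A t| ≤ 210 * A^3 := by
  unfold ffun3
  rw [abs_neg, abs_mul, abs_mul, abs_mul, abs_of_nonneg hA]
  calc |kfun2 (A*t)| * A * A * A ≤ 210 * A * A * A := by
        refine mul_le_mul_of_nonneg_right (mul_le_mul_of_nonneg_right
          (mul_le_mul_of_nonneg_right (abs_kfun2_le _) hA) hA) hA
    _ = 210 * A^3 := by ring

/-- Existence of the truncated virial weight: absolute constants `κ, C > 0` such that for
every `c, R > 0` there is `q ∈ C^{3,1}((0,∞))` with `q(r) = r²/2` for `r ≤ R`, `q` constant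
for `r ≥ κ e^{κ/c} R`, `|q'(r)| ≤ C r`, `|q''(r)| ≤ C`, `q''(r) ≥ −c`, `q'(r)/r ≥ −c`,
`Δ²q(r) ≤ c r⁻²` a.e. (where `Δq = q'' + q'/r`), and `|r·(q'(r)/r)'| ≤ c`. -/
theorem stmt_16 :
    ∃ κ : ℝ, 0 < κ ∧ ∃ C : ℝ, 0 < C ∧ ∀ c : ℝ, 0 < c → ∀ R : ℝ, 0 < R → ∃ q : ℝ → ℝ,
      -- regularity: C³ on (0,∞) with locally Lipschitz third derivative
      ContDiffOn ℝ 3 q (Ioi 0) ∧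
      (∀ x ∈ Ioi (0:ℝ), ∃ K : NNReal, ∃ s ∈ nhdsWithin x (Ioi 0),
        LipschitzOnWith K (deriv (deriv (deriv q))) s) ∧
      -- (P1)
      (∀ r : ℝ, 0 < r → r ≤ R → q r = r ^ 2 / 2) ∧
      -- (P2)
      (∃ a : ℝ, ∀ r : ℝ, κ * Real.exp (κ / c) * R ≤ r → q r = a) ∧
      -- (P3)
      (∀ r : ℝ, 0 < r → |deriv q r| ≤ C * r ∧ |deriv (deriv q) r| ≤ C) ∧
      -- (P4)
      (∀ r : ℝ, 0 < r → -c ≤ deriv (deriv q) r ∧ -c ≤ deriv q r / r) ∧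
      -- (P5): Δ²q(r) ≤ c·r⁻² for a.e. r > 0, where Δq(r) = q''(r) + q'(r)/r
      (∀ᵐ r ∂(volume.restrict (Ioi (0:ℝ))),
        deriv (deriv (fun s => deriv (deriv q) s + deriv q s / s)) r
          + deriv (fun s => deriv (deriv q) s + deriv q s / s) r / r ≤ c / r ^ 2) ∧
      -- (P6)
      (∀ r : ℝ, 0 < r → |r * deriv (fun s => deriv q s / s) r| ≤ c) := by
  refine ⟨200000, by norm_num, 2, by norm_num, ?_⟩
  intro c hc R hR
  set A : ℝ := min c 1 / 12 with hAdef
  have hcm : 0 < min c 1 := lt_min hc one_pos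
  have hA0 : 0 < A := by positivity
  have hA12 : A ≤ 1/12 := by
    have h := min_le_right c 1
    rw [hAdef]; linarith
  have hAc : 12 * A ≤ c := by
    have h := min_le_left c 1
    rw [hAdef]; linarith
  set L : ℝ → ℝ := fun s => Real.log s - Real.log R with hLdef
  set F : ℝ → ℝ := fun s => s * ffun A (L s) with hFdef
  have hFcont : Continuous F := by
    rw [continuous_iff_continuousAt]
    intro x
    by_cases hx : x = 0
    · subst hx
      have hev : (fun s : ℝ => s) =ᶠ[nhds (0:ℝ)] F := by
        filter_upwards [Ioo_mem_nhds (neg_lt_zero.mpr hR) hR] with s hs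
        rcases eq_or_ne s 0 with rfl | hs0
        · simp [hFdef]
        · have habs : |s| < R := abs_lt.mpr ⟨hs.1, hs.2⟩
          have hlog : Real.log s ≤ Real.log R := by
            rw [← Real.log_abs]
            exact Real.log_le_log (abs_pos.mpr hs0) habs.le
          have hAL : A * L s ≤ 0 := mul_nonpos_of_nonneg_of_nonpos hA0.le
            (by rw [hLdef]; simp only; linarith)
          rw [hFdef]; simp only
          rw [ffun_eq_one hAL, mul_one]
      exact continuousAt_id.congr hev
    · exact continuousAt_id.mul ((continuous_ffun A).continuousAt.comp
        ((Real.continuousAt_log hx).sub continuousAt_const))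
  set q : ℝ → ℝ := fun r => ∫ s in (0:ℝ)..r, F s with hqdef
  have hq' : ∀ r, HasDerivAt q (F r) r := fun r =>
    (hFcont.integral_hasStrictDerivAt 0 r).hasDerivAt
  have hdq : deriv q = F := funext fun r => (hq' r).deriv
  have hL' : ∀ {r : ℝ}, r ≠ 0 → HasDerivAt L r⁻¹ r := fun {r} hr =>
    (Real.hasDerivAt_log hr).sub_const _
  set Q2 : ℝ → ℝ := fun r => ffun A (L r) + ffun1 A (L r) with hQ2def
  have hF' : ∀ r : ℝ, 0 < r → HasDerivAt F (Q2 r) r := by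
    intro r hr
    have h1 := (hasDerivAt_ffun A (L r)).comp r (hL' hr.ne')
    have h2 := (hasDerivAt_id r).mul h1
    have h3 : HasDerivAt F (1 * (ffun A (L r)) + r * (ffun1 A (L r) * r⁻¹)) r := h2
    convert h3 using 1
    rw [hQ2def]; field_simp
  have hd2 : ∀ r ∈ Ioi (0:ℝ), deriv (deriv q) r = Q2 r := by
    intro r hr; rw [hdq]; exact (hF' r hr).deriv
  set Q3 : ℝ → ℝ := fun r => (ffun1 A (L r) + ffun2 A (L r)) * r⁻¹ with hQ3def
  have hQ2' : ∀ r : ℝ, 0 < r → HasDerivAt Q2 (Q3 r) r := by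
    intro r hr
    have h1 := (hasDerivAt_ffun A (L r)).comp r (hL' hr.ne')
    have h2 := (hasDerivAt_ffun1 A (L r)).comp r (hL' hr.ne')
    have h3 := h1.add h2
    refine h3.congr_deriv ?_
    rw [hQ3def]; ring
  have hd3 : ∀ r ∈ Ioi (0:ℝ), deriv (deriv (deriv q)) r = Q3 r := by
    intro r hr
    have hev : deriv (deriv q) =ᶠ[nhds r] Q2 := eventually_of_mem (Ioi_mem_nhds hr) hd2
    rw [hev.deriv_eq]
    exact (hQ2' r hr).deriv
  refine ⟨q, ?_, ?_, ?_, ?_, ?_, ?_, ?_, ?_⟩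
  · -- regularity
    rw [show (3 : WithTop ℕ∞) = 2 + 1 from rfl,
      contDiffOn_succ_iff_deriv_of_isOpen isOpen_Ioi]
    refine ⟨fun r _ => (hq' r).differentiableAt.differentiableWithinAt, by simp, ?_⟩
    rw [hdq]
    rw [show (2 : WithTop ℕ∞) = 1 + 1 from rfl,
      contDiffOn_succ_iff_deriv_of_isOpen isOpen_Ioi]
    refine ⟨fun r hr => (hF' r hr).differentiableAt.differentiableWithinAt, by simp, ?_⟩
    have hcongr : EqOn (deriv F) Q2 (Ioi 0) := fun r hr => (hF' r hr).deriv
    refine ContDiffOn.congr ?_ hcongr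
    rw [show (1 : WithTop ℕ∞) = 0 + 1 from rfl,
      contDiffOn_succ_iff_deriv_of_isOpen isOpen_Ioi]
    refine ⟨fun r hr => (hQ2' r hr).differentiableAt.differentiableWithinAt, by simp, ?_⟩
    have hcongr2 : EqOn (deriv Q2) Q3 (Ioi 0) := fun r hr => (hQ2' r hr).deriv
    refine ContDiffOn.congr ?_ hcongr2
    rw [contDiffOn_zero]
    intro r hr
    have hrpos : (0:ℝ) < r := hr
    have hLc : ContinuousAt L r := (Real.continuousAt_log hrpos.ne').sub continuousAt_const
    exact ((((continuous_ffun1 A).continuousAt.comp hLc).add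
      ((continuous_ffun2 A).continuousAt.comp hLc)).mul
      (continuousAt_id.inv₀ hrpos.ne')).continuousWithinAt
  · -- Lipschitz third derivative
    intro x hx
    have hx0 : (0:ℝ) < x := hx
    have hLC : ContDiffAt ℝ 1 L x := (Real.contDiffAt_log.mpr hx0.ne').sub contDiffAt_const
    have hC1 : ContDiffAt ℝ 1 Q3 x := by
      refine ContDiffAt.mul ?_ (contDiffAt_id.inv hx0.ne')
      exact ((contDiff_one_ffun1 A).contDiffAt.comp x hLC).add
        (((contDiff_one_ffun2 A).contDiffAt.comp x hLC))
    obtain ⟨K, t, ht, hK⟩ := hC1.exists_lipschitzOnWith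
    refine ⟨K, t ∩ Ioi 0, inter_mem (nhdsWithin_le_nhds ht) self_mem_nhdsWithin, ?_⟩
    intro a ha b hb
    have e1 : deriv (deriv (deriv q)) a = Q3 a := hd3 a ha.2
    have e2 : deriv (deriv (deriv q)) b = Q3 b := hd3 b hb.2
    rw [e1, e2]
    exact hK ha.1 hb.1
  · -- P1
    intro r hr hrR
    show (∫ s in (0:ℝ)..r, F s) = r^2/2
    rw [intervalIntegral.integral_congr (g := fun s : ℝ => s) ?_]
    · rw [integral_id]; norm_num
    · intro s hs
      rw [uIcc_of_le hr.le] at hs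
      rcases eq_or_lt_of_le hs.1 with h0 | h0
      · rw [hFdef]; simp [← h0]
      · have hlog : Real.log s ≤ Real.log R := Real.log_le_log h0 (hs.2.trans hrR)
        have hAL : A * L s ≤ 0 := mul_nonpos_of_nonneg_of_nonpos hA0.le
          (by rw [hLdef]; simp only; linarith)
        rw [hFdef]; simp only
        rw [ffun_eq_one hAL, mul_one]
  · -- P2
    refine ⟨q (200000 * Real.exp (200000 / c) * R), ?_⟩
    intro r hrr
    set s₀ : ℝ := 200000 * Real.exp (200000 / c) * R with hs₀def
    have hs₀pos : 0 < s₀ := by positivity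
    have hble : Real.exp (1/A) ≤ 200000 * Real.exp (200000/c) := by
      rcases le_total c 1 with hc1 | hc1
      · have hmin : min c 1 = c := min_eq_left hc1
        have h1 : (1:ℝ)/A = 12/c := by rw [hAdef, hmin]; field_simp
        rw [h1]
        have h2 : Real.exp (12/c) ≤ Real.exp (200000/c) :=
          Real.exp_le_exp.mpr ((div_le_div_iff_of_pos_right hc).mpr (by norm_num))
        nlinarith [Real.exp_pos (200000/c)]
      · have hmin : min c 1 = 1 := min_eq_right hc1
        have h1 : (1:ℝ)/A = 12 := by rw [hAdef, hmin]; norm_num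
        rw [h1]
        have he12 : Real.exp 12 ≤ 200000 := by
          have h := Real.exp_one_lt_d9
          have h2 : Real.exp 12 = Real.exp 1 ^ (12:ℕ) := by
            rw [← Real.exp_nat_mul]; norm_num
          rw [h2]
          calc Real.exp 1 ^ (12:ℕ) ≤ 2.7182818286 ^ (12:ℕ) :=
                pow_le_pow_left₀ (Real.exp_pos 1).le h.le 12
            _ ≤ 200000 := by norm_num
        have hexp1 : (1:ℝ) ≤ Real.exp (200000/c) := by
          have := Real.add_one_le_exp (200000/c)
          have : (0:ℝ) ≤ 200000/c := by positivity
          nlinarith [Real.add_one_le_exp (200000/c)]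
        nlinarith
    have hethr : Real.exp (1/A) * R ≤ s₀ := by
      rw [hs₀def]
      exact mul_le_mul_of_nonneg_right hble hR.le
    have hkey : ∀ s : ℝ, s₀ ≤ s → F s = 0 := by
      intro s hs
      have rs : Real.exp (1/A) * R ≤ s := hethr.trans hs
      have hlog : Real.log (Real.exp (1/A) * R) ≤ Real.log s :=
        Real.log_le_log (by positivity) rs
      rw [Real.log_mul (Real.exp_ne_zero _) hR.ne', Real.log_exp] at hlog
      have hLs : 1/A ≤ L s := by rw [hLdef]; simp only; linarith
      have h1A : 1 ≤ A * L s := by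
        have := (div_le_iff₀ hA0).mp hLs
        linarith [this]
      rw [hFdef]; simp only
      rw [ffun_eq_zero h1A, mul_zero]
    have hs₀r : s₀ ≤ r := hrr
    have hadd : q s₀ + ∫ s in s₀..r, F s = q r :=
      intervalIntegral.integral_add_adjacent_intervals
        (hFcont.intervalIntegrable _ _) (hFcont.intervalIntegrable _ _)
    have hz : (∫ s in s₀..r, F s) = 0 := by
      rw [intervalIntegral.integral_congr (g := fun _ : ℝ => (0:ℝ)) ?_]
      · simp
      · intro s hs
        rw [uIcc_of_le hs₀r] at hs
        exact hkey s hs.1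
    rw [hz, add_zero] at hadd
    exact hadd.symm
  · -- P3
    intro r hr
    have habs1 : |ffun A (L r)| ≤ 1 :=
      abs_le.mpr ⟨by linarith [ffun_nonneg A (L r)], ffun_le_one A (L r)⟩
    constructor
    · rw [hdq, hFdef]; simp only
      rw [abs_mul, abs_of_nonneg hr.le]
      nlinarith
    · rw [hd2 r hr, hQ2def]; simp only
      have h1 := abs_ffun1_le hA0.le (L r)
      have h2 : 35/16 * A ≤ 1 := by nlinarith
      calc |ffun A (L r) + ffun1 A (L r)| ≤ |ffun A (L r)| + |ffun1 A (L r)| := abs_add_le _ _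
        _ ≤ 1 + 1 := by linarith
        _ = 2 := by norm_num
  · -- P4
    intro r hr
    have h35 : 35/16 * A ≤ c := by nlinarith
    constructor
    · rw [hd2 r hr, hQ2def]; simp only
      have h0 := ffun_nonneg A (L r)
      have h1 := (abs_le.mp (abs_ffun1_le hA0.le (L r))).1
      linarith
    · rw [hdq, hFdef]; simp only
      rw [mul_div_cancel_left₀ _ hr.ne']
      have := ffun_nonneg A (L r); linarith
  · -- P5
    rw [ae_restrict_iff' measurableSet_Ioi]
    refine ae_of_all _ ?_
    intro r hr
    have hrpos : (0:ℝ) < r := hr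
    set W : ℝ → ℝ := fun s => ffun A (L s) + ffun1 A (L s) + ffun A (L s) with hWdef
    have hΦW : ∀ s ∈ Ioi (0:ℝ), deriv (deriv q) s + deriv q s / s = W s := by
      intro s hs
      have hs0 : (0:ℝ) < s := hs
      rw [hd2 s hs, hdq, hQ2def, hWdef, hFdef]; simp only
      rw [mul_div_cancel_left₀ _ hs0.ne']
    set W1 : ℝ → ℝ := fun s => (ffun1 A (L s) + ffun2 A (L s) + ffun1 A (L s)) * s⁻¹ with hW1def
    have hW' : ∀ s : ℝ, 0 < s → HasDerivAt W (W1 s) s := by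
      intro s hs
      have h1 := (hasDerivAt_ffun A (L s)).comp s (hL' hs.ne')
      have h2 := (hasDerivAt_ffun1 A (L s)).comp s (hL' hs.ne')
      have h3 := (h1.add h2).add h1
      refine h3.congr_deriv ?_
      rw [hW1def]; ring
    have hdΦ : ∀ s ∈ Ioi (0:ℝ),
        deriv (fun u => deriv (deriv q) u + deriv q u / u) s = W1 s := by
      intro s hs
      have hev : (fun u => deriv (deriv q) u + deriv q u / u) =ᶠ[nhds s] W :=
        eventually_of_mem (Ioi_mem_nhds hs) hΦW
      rw [hev.deriv_eq]
      exact (hW' s hs).deriv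
    have hW1' : HasDerivAt W1
        ((ffun2 A (L r) + ffun3 A (L r) + ffun2 A (L r)) * r⁻¹ * r⁻¹
          + (ffun1 A (L r) + ffun2 A (L r) + ffun1 A (L r)) * (-(r^2)⁻¹)) r := by
      have h1 := (hasDerivAt_ffun1 A (L r)).comp r (hL' hrpos.ne')
      have h2 := (hasDerivAt_ffun2 A (L r)).comp r (hL' hrpos.ne')
      have hsum := (h1.add h2).add h1
      have hinv := hasDerivAt_inv hrpos.ne'
      have h3 := hsum.mul hinv
      refine h3.congr_deriv ?_
      simp only [Pi.add_apply, Function.comp_apply]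
      ring
    have hd2Φ : deriv (deriv (fun u => deriv (deriv q) u + deriv q u / u)) r
        = (ffun2 A (L r) + ffun3 A (L r) + ffun2 A (L r)) * r⁻¹ * r⁻¹
          + (ffun1 A (L r) + ffun2 A (L r) + ffun1 A (L r)) * (-(r^2)⁻¹) := by
      have hev : deriv (fun u => deriv (deriv q) u + deriv q u / u) =ᶠ[nhds r] W1 :=
        eventually_of_mem (Ioi_mem_nhds hr) hdΦ
      rw [hev.deriv_eq]
      exact hW1'.deriv
    rw [hd2Φ, hdΦ r hr, hW1def]
    have hb2 := abs_ffun2_le hA0.le (L r)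
    have hb3 := abs_ffun3_le hA0.le (L r)
    have hA2 : A^2 ≤ A/12 := by nlinarith
    have hA3 : A^3 ≤ A/144 := by nlinarith
    have hH2c : ffun2 A (L r) + ffun3 A (L r) + ffun2 A (L r) ≤ c := by
      have b2 := (abs_le.mp hb2).2
      have b3 := (abs_le.mp hb3).2
      nlinarith
    have heq : (ffun2 A (L r) + ffun3 A (L r) + ffun2 A (L r)) * r⁻¹ * r⁻¹
          + (ffun1 A (L r) + ffun2 A (L r) + ffun1 A (L r)) * (-(r^2)⁻¹)
          + (ffun1 A (L r) + ffun2 A (L r) + ffun1 A (L r)) * r⁻¹ / r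
        = (ffun2 A (L r) + ffun3 A (L r) + ffun2 A (L r)) / r^2 := by
      field_simp
      ring
    rw [heq]
    have hr2 : (0:ℝ) < r^2 := by positivity
    exact (div_le_div_iff_of_pos_right hr2).mpr hH2c
  · -- P6
    intro r hr
    have h1 := (hasDerivAt_ffun A (L r)).comp r (hL' (ne_of_gt hr))
    have hev : (fun s => deriv q s / s) =ᶠ[nhds r] (ffun A ∘ L) := by
      filter_upwards [Ioi_mem_nhds hr] with s hs
      rw [hdq, hFdef]; simp only [Function.comp_apply]
      exact mul_div_cancel_left₀ _ (ne_of_gt hs)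
    rw [hev.deriv_eq, h1.deriv]
    have heq : r * (ffun1 A (L r) * r⁻¹) = ffun1 A (L r) := by field_simp
    rw [heq]
    have h1b := abs_ffun1_le hA0.le (L r)
    have h35 : 35/16 * A ≤ c := by nlinarith
    calc |ffun1 A (L r)| ≤ 35/16*A := h1b
      _ ≤ c := h35
end

section
/- There exists a constant C > 0 such that for all λ₁, λ₂ > 0, ‖Q_{λ₁} − Q_{λ₂}‖_H ≤ C·|log(λ₁/λ₂)|, where Q_λ(r) = 2·arctan(r/λ) and ‖v‖_H² = ∫₀^∞ ((∂_r v(r))² + v(r)²/r²) r dr. -/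
open MeasureTheory Set

set_option maxHeartbeats 1000000

section Aux
open Real



lemma arctan_sub_le {x y : ℝ} (h : y ≤ x) : Real.arctan x - Real.arctan y ≤ x - y := by
  have hm : Monotone (fun z : ℝ => z - Real.arctan z) := by
    apply monotone_of_deriv_nonneg
    · exact differentiable_id.sub Real.differentiable_arctan
    · intro z
      have hz : HasDerivAt (fun z : ℝ => z - Real.arctan z) (1 - 1 / (1 + z ^ 2)) z :=
        (hasDerivAt_id z).sub (Real.hasDerivAt_arctan z)
      rw [hz.deriv]
      have h1 : (0:ℝ) < 1 + z ^ 2 := by positivity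
      rw [sub_nonneg, div_le_one h1]; nlinarith
  have := hm h
  simp only at this
  linarith

lemma hasDerivAt_Q (l r : ℝ) (hl : l ≠ 0) :
    HasDerivAt (fun s : ℝ => 2 * Real.arctan (s / l)) (2 * l / (l ^ 2 + r ^ 2)) r := by
  have h : HasDerivAt (fun s : ℝ => s / l) (1 / l) r := (hasDerivAt_id r).div_const l
  have h2 := (h.arctan).const_mul 2
  refine h2.congr_deriv ?_
  have hl2 : (0:ℝ) < l ^ 2 + r ^ 2 := by positivity
  have h3 : (0:ℝ) < 1 + (r / l) ^ 2 := by positivity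
  field_simp

lemma arctan_log_bound {b a r : ℝ} (hb : 0 < b) (hba : b ≤ a) (hr : 0 < r) :
    Real.arctan (r / b) - Real.arctan (r / a) ≤ (Real.log a - Real.log b) / 2 := by
  have key : MonotoneOn (fun l : ℝ => Real.arctan (r / l) + Real.log l / 2) (Ici b) := by
    have hD : ∀ l : ℝ, b ≤ l → HasDerivAt (fun l : ℝ => Real.arctan (r / l) + Real.log l / 2)
        (1 / (1 + (r / l) ^ 2) * ((0 * l - r * 1) / l ^ 2) + l⁻¹ / 2) l := by
      intro l hl
      have hl0 : l ≠ 0 := (hb.trans_le hl).ne'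
      exact (((hasDerivAt_const l r).div (hasDerivAt_id l) hl0).arctan).add
        ((Real.hasDerivAt_log hl0).div_const 2)
    apply monotoneOn_of_deriv_nonneg (convex_Ici b)
    · intro l hl
      exact ((hD l hl).continuousAt).continuousWithinAt
    · intro l hl
      rw [interior_Ici] at hl
      exact ((hD l hl.le).differentiableAt).differentiableWithinAt
    · intro l hl
      rw [interior_Ici] at hl
      have hl0 : 0 < l := hb.trans hl
      rw [(hD l hl.le).deriv]
      have h1 : (0:ℝ) < 1 + (r / l) ^ 2 := by positivity
      have h2 : 1 / (1 + (r / l) ^ 2) * ((0 * l - r * 1) / l ^ 2) = -(r / (l ^ 2 + r ^ 2)) := by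
        field_simp
        ring
      rw [h2]
      have h3 : (0:ℝ) < l ^ 2 + r ^ 2 := by positivity
      have h4 : l⁻¹ / 2 = 1 / (2 * l) := by
        field_simp
      rw [neg_add_eq_sub, sub_nonneg, h4, div_le_div_iff₀ h3 (by positivity : (0:ℝ) < 2 * l)]
      nlinarith [sq_nonneg (l - r)]
  have h := key (self_mem_Ici) (by exact hba : a ∈ Ici b) hba
  simp only at h
  linarith



section
variable {b a r : ℝ}

lemma denom_pos (ha : 0 < a) (r : ℝ) : (0:ℝ) < a ^ 2 + r ^ 2 := by positivity

lemma D_abs (hb : 0 < b) (hba : b ≤ a) (r : ℝ) :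
    |2 * a / (a ^ 2 + r ^ 2) - 2 * b / (b ^ 2 + r ^ 2)| =
      2 * (a - b) * |r ^ 2 - a * b| / ((a ^ 2 + r ^ 2) * (b ^ 2 + r ^ 2)) := by
  have ha : 0 < a := hb.trans_le hba
  have h1 : (0:ℝ) < a ^ 2 + r ^ 2 := by positivity
  have h2 : (0:ℝ) < b ^ 2 + r ^ 2 := by positivity
  have hExp : 2 * a / (a ^ 2 + r ^ 2) - 2 * b / (b ^ 2 + r ^ 2) =
      2 * (a - b) * (r ^ 2 - a * b) / ((a ^ 2 + r ^ 2) * (b ^ 2 + r ^ 2)) := by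
    field_simp
    ring
  rw [hExp, abs_div, abs_mul, abs_of_nonneg (by linarith : (0:ℝ) ≤ 2 * (a - b)),
    abs_of_pos (mul_pos h1 h2)]

lemma D_bound1 (hb : 0 < b) (hba : b ≤ a) (r : ℝ) :
    |2 * a / (a ^ 2 + r ^ 2) - 2 * b / (b ^ 2 + r ^ 2)| ≤ 2 * (a - b) / (a * b) := by
  have ha : 0 < a := hb.trans_le hba
  have h1 : (0:ℝ) < a ^ 2 + r ^ 2 := by positivity
  have h2 : (0:ℝ) < b ^ 2 + r ^ 2 := by positivity
  rw [D_abs hb hba, div_le_div_iff₀ (mul_pos h1 h2) (mul_pos ha hb)]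
  rcases abs_cases (r ^ 2 - a * b) with ⟨h, h'⟩ | ⟨h, h'⟩ <;> rw [h] <;>
    nlinarith [mul_nonneg (mul_nonneg (sub_nonneg.2 hba) ha.le) (sq_nonneg r),
      mul_nonneg (mul_nonneg (sub_nonneg.2 hba) hb.le) (sq_nonneg r),
      mul_nonneg (mul_nonneg (sub_nonneg.2 hba) ha.le) (mul_pos ha hb).le,
      sq_nonneg (a*b - r^2), mul_pos ha hb, sq_nonneg r,
      mul_nonneg (sub_nonneg.2 hba) (sq_nonneg (r^2))]

lemma D_bound2 (hb : 0 < b) (hba : b ≤ a) (hr : 0 < r) :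
    |2 * a / (a ^ 2 + r ^ 2) - 2 * b / (b ^ 2 + r ^ 2)| ≤ (a - b) / (a * r) := by
  have ha : 0 < a := hb.trans_le hba
  have h1 : (0:ℝ) < a ^ 2 + r ^ 2 := by positivity
  have h2 : (0:ℝ) < b ^ 2 + r ^ 2 := by positivity
  have core : 2 * a * r * |r ^ 2 - a * b| ≤ (a ^ 2 + r ^ 2) * (b ^ 2 + r ^ 2) := by
    rcases abs_cases (r ^ 2 - a * b) with ⟨h, h'⟩ | ⟨h, h'⟩ <;> rw [h]
    · nlinarith [mul_nonneg (sq_nonneg (a - r)) h',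
        mul_nonneg h1.le (show (0:ℝ) ≤ b ^ 2 + a * b by positivity)]
    · nlinarith [mul_nonneg (mul_pos ha hr).le (sq_nonneg r),
        mul_nonneg (sq_nonneg a) (sq_nonneg (b - r)), mul_nonneg (sq_nonneg r) h2.le]
  rw [D_abs hb hba, div_le_div_iff₀ (mul_pos h1 h2) (mul_pos ha hr)]
  nlinarith [mul_le_mul_of_nonneg_left core (sub_nonneg.2 hba), abs_nonneg (r ^ 2 - a * b)]

lemma D_bound3 (hb : 0 < b) (hba : b ≤ a) (hr : 0 < r) :
    |2 * a / (a ^ 2 + r ^ 2) - 2 * b / (b ^ 2 + r ^ 2)| ≤ 2 * (a - b) / r ^ 2 := by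
  have ha : 0 < a := hb.trans_le hba
  have h1 : (0:ℝ) < a ^ 2 + r ^ 2 := by positivity
  have h2 : (0:ℝ) < b ^ 2 + r ^ 2 := by positivity
  rw [D_abs hb hba, div_le_div_iff₀ (mul_pos h1 h2) (by positivity : (0:ℝ) < r ^ 2)]
  rcases abs_cases (r ^ 2 - a * b) with ⟨h, h'⟩ | ⟨h, h'⟩ <;> rw [h] <;>
    nlinarith [mul_nonneg (sub_nonneg.2 hba) (sq_nonneg r), mul_pos ha hb,
      mul_nonneg (mul_nonneg (sub_nonneg.2 hba) ha.le) (sq_nonneg r),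
      mul_nonneg (mul_nonneg (sub_nonneg.2 hba) hb.le) (sq_nonneg r),
      mul_nonneg (sub_nonneg.2 hba) (sq_nonneg (r^2)),
      mul_nonneg (mul_nonneg (sub_nonneg.2 hba) ha.le) (mul_pos ha hb).le]

lemma F_abs (hb : 0 < b) (hba : b ≤ a) (hr : 0 ≤ r) :
    |2 * Real.arctan (r / a) - 2 * Real.arctan (r / b)| =
      2 * (Real.arctan (r / b) - Real.arctan (r / a)) := by
  have hmono : Real.arctan (r / a) ≤ Real.arctan (r / b) :=
    Real.arctan_strictMono.monotone (div_le_div_of_nonneg_left hr hb hba)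
  rw [abs_sub_comm, abs_of_nonneg (by linarith)]
  ring

lemma F_bound1 (hb : 0 < b) (hba : b ≤ a) (hr : 0 ≤ r) :
    |2 * Real.arctan (r / a) - 2 * Real.arctan (r / b)| ≤ 2 * r * (a - b) / (a * b) := by
  have ha : 0 < a := hb.trans_le hba
  have h1 := arctan_sub_le (div_le_div_of_nonneg_left hr hb hba)
  have h2 : r / b - r / a = r * (a - b) / (a * b) := by field_simp
  rw [F_abs hb hba hr]
  have h3 : 2 * r * (a - b) / (a * b) = 2 * (r * (a - b) / (a * b)) := by ring
  rw [h3]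
  linarith [h1, h2.symm.le]

lemma F_bound2 (hb : 0 < b) (hba : b ≤ a) (hr : 0 < r) :
    |2 * Real.arctan (r / a) - 2 * Real.arctan (r / b)| ≤ 2 * (a - b) / r := by
  have ha : 0 < a := hb.trans_le hba
  have hib : Real.arctan (r / b) = π / 2 - Real.arctan (b / r) := by
    rw [← Real.arctan_inv_of_pos (div_pos hb hr), inv_div]
  have hia : Real.arctan (r / a) = π / 2 - Real.arctan (a / r) := by
    rw [← Real.arctan_inv_of_pos (div_pos ha hr), inv_div]
  have hmono : b / r ≤ a / r := by gcongr
  have h1 := arctan_sub_le hmono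
  have h2 : a / r - b / r = (a - b) / r := by ring
  have h3 : 2 * (a - b) / r = 2 * ((a - b) / r) := by ring
  rw [F_abs hb hba hr.le, hib, hia]
  linarith

lemma F_bound3 (hb : 0 < b) (hba : b ≤ a) (hr : 0 < r) :
    |2 * Real.arctan (r / a) - 2 * Real.arctan (r / b)| ≤ Real.log a - Real.log b := by
  have h := arctan_log_bound hb hba hr
  rw [F_abs hb hba hr.le]
  linarith

lemma F_bound4 (hb : 0 < b) (hba : b ≤ a) (hr : 0 ≤ r) :
    |2 * Real.arctan (r / a) - 2 * Real.arctan (r / b)| ≤ 2 * π := by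
  rw [F_abs hb hba hr]
  have h1 := Real.arctan_lt_pi_div_two (r / b)
  have h2 := Real.neg_pi_div_two_lt_arctan (r / a)
  linarith

end

lemma sq_le_of_abs_le {x y : ℝ} (h : |x| ≤ y) : x ^ 2 ≤ y ^ 2 := by
  rw [← sq_abs x]
  exact pow_le_pow_left₀ (abs_nonneg x) h 2

lemma key (hb : 0 < b) (hba : b ≤ a) :
    (∫ r in Ioi (0:ℝ),
      ((2 * a / (a ^ 2 + r ^ 2) - 2 * b / (b ^ 2 + r ^ 2)) ^ 2 +
        (2 * Real.arctan (r / a) - 2 * Real.arctan (r / b)) ^ 2 / r ^ 2) * r)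
      ≤ 25 * (Real.log a - Real.log b) ^ 2 := by
  have ha : 0 < a := hb.trans_le hba
  set t := Real.log a - Real.log b with ht_def
  have ht : 0 ≤ t := sub_nonneg.2 (Real.log_le_log hb hba)
  set c := a - b with hc_def
  have hc0 : 0 ≤ c := sub_nonneg.2 hba
  have hu : c ≤ a * t := by
    have h := Real.log_le_sub_one_of_pos (div_pos hb ha)
    rw [Real.log_div hb.ne' ha.ne'] at h
    have h2 : 1 - b / a ≤ t := by rw [ht_def]; linarith
    have h3 : a * (1 - b / a) = a - b := by field_simp
    nlinarith
  set m := min t (2 * π) with hm_def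
  have hm0 : 0 ≤ m := le_min ht (by positivity)
  have hm1 : m ≤ t := min_le_left _ _
  have hm2 : m ≤ 2 * π := min_le_right _ _
  set φ : ℝ → ℝ := fun r =>
    ((2 * a / (a ^ 2 + r ^ 2) - 2 * b / (b ^ 2 + r ^ 2)) ^ 2 +
      (2 * Real.arctan (r / a) - 2 * Real.arctan (r / b)) ^ 2 / r ^ 2) * r with hφ_def
  -- measurability
  have hmeas : Measurable φ := by
    have hc1 : Continuous fun r : ℝ => 2 * a / (a ^ 2 + r ^ 2) - 2 * b / (b ^ 2 + r ^ 2) := by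
      apply Continuous.sub <;>
        exact continuous_const.div (by continuity) (fun r => by positivity)
    have hc2 : Continuous fun r : ℝ => 2 * Real.arctan (r / a) - 2 * Real.arctan (r / b) := by
      continuity
    exact (((hc1.pow 2).measurable.add
      ((hc2.pow 2).measurable.div (measurable_id.pow_const 2))).mul measurable_id)
  have hφ0 : ∀ r ∈ Ioi (0:ℝ), 0 ≤ φ r := fun r hr =>
    mul_nonneg (add_nonneg (sq_nonneg _) (div_nonneg (sq_nonneg _) (sq_nonneg _))) (le_of_lt hr)
  -- dominating functions
  set g₁ : ℝ → ℝ := fun r => 8 * (c / (a * b)) ^ 2 * r with hg₁_def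
  set g₂ : ℝ → ℝ := fun r => 2 * m ^ 2 / r with hg₂_def
  set g₃ : ℝ → ℝ := fun r => 8 * c ^ 2 * r ^ (-3 : ℝ) with hg₃_def
  -- pointwise bounds
  have hb₁ : ∀ r ∈ Ioc (0:ℝ) b, φ r ≤ g₁ r := by
    intro r hr
    have hr0 : 0 < r := hr.1
    have h1 : (2 * a / (a ^ 2 + r ^ 2) - 2 * b / (b ^ 2 + r ^ 2)) ^ 2 ≤ (2 * c / (a * b)) ^ 2 :=
      sq_le_of_abs_le (D_bound1 hb hba r)
    have h2 : (2 * Real.arctan (r / a) - 2 * Real.arctan (r / b)) ^ 2 ≤ (2 * r * c / (a * b)) ^ 2 :=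
      sq_le_of_abs_le (F_bound1 hb hba hr0.le)
    have h3 : (2 * r * c / (a * b)) ^ 2 / r ^ 2 = (2 * c / (a * b)) ^ 2 := by
      field_simp
    simp only [hφ_def, hg₁_def]
    calc ((2 * a / (a ^ 2 + r ^ 2) - 2 * b / (b ^ 2 + r ^ 2)) ^ 2 +
          (2 * Real.arctan (r / a) - 2 * Real.arctan (r / b)) ^ 2 / r ^ 2) * r
        ≤ ((2 * c / (a * b)) ^ 2 + (2 * r * c / (a * b)) ^ 2 / r ^ 2) * r := by
          apply mul_le_mul_of_nonneg_right _ hr0.le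
          exact add_le_add h1 ((div_le_div_iff_of_pos_right (by positivity)).mpr h2)
      _ = 8 * (c / (a * b)) ^ 2 * r := by rw [h3]; ring
  have hb₂ : ∀ r ∈ Ioc b a, φ r ≤ g₂ r := by
    intro r hr
    have hr0 : 0 < r := hb.trans hr.1
    have hca : c / a ≤ m := by
      apply le_min
      · rw [div_le_iff₀ ha]; nlinarith
      · have : c / a ≤ 1 := (div_le_one ha).2 (by simp only [hc_def]; linarith)
        nlinarith [Real.pi_gt_three]
    have hD : |2 * a / (a ^ 2 + r ^ 2) - 2 * b / (b ^ 2 + r ^ 2)| ≤ m / r := by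
      refine (D_bound2 hb hba hr0).trans ?_
      rw [show c / (a * r) = (c / a) / r by ring]
      exact (div_le_div_iff_of_pos_right hr0).mpr hca
    have hF : |2 * Real.arctan (r / a) - 2 * Real.arctan (r / b)| ≤ m := by
      rcases le_total t (2 * π) with h | h
      · have : m = t := min_eq_left h
        rw [this]; exact F_bound3 hb hba hr0
      · have : m = 2 * π := min_eq_right h
        rw [this]; exact F_bound4 hb hba hr0.le
    have h1 := sq_le_of_abs_le hD
    have h2 := sq_le_of_abs_le hF
    simp only [hφ_def, hg₂_def]
    calc ((2 * a / (a ^ 2 + r ^ 2) - 2 * b / (b ^ 2 + r ^ 2)) ^ 2 +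
          (2 * Real.arctan (r / a) - 2 * Real.arctan (r / b)) ^ 2 / r ^ 2) * r
        ≤ ((m / r) ^ 2 + m ^ 2 / r ^ 2) * r := by
          apply mul_le_mul_of_nonneg_right _ hr0.le
          exact add_le_add h1 ((div_le_div_iff_of_pos_right (by positivity)).mpr h2)
      _ = 2 * m ^ 2 / r := by field_simp; ring
  have hb₃ : ∀ r ∈ Ioi a, φ r ≤ g₃ r := by
    intro r hr
    have hr0 : 0 < r := ha.trans hr
    have h1 := sq_le_of_abs_le (D_bound3 hb hba hr0)
    have h2 := sq_le_of_abs_le (F_bound2 hb hba hr0)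
    have hr3 : r ^ (-3 : ℝ) = (r ^ 3)⁻¹ := by
      rw [show (-3 : ℝ) = -((3:ℕ):ℝ) by norm_num, Real.rpow_neg hr0.le, Real.rpow_natCast]
    simp only [hφ_def, hg₃_def]
    calc ((2 * a / (a ^ 2 + r ^ 2) - 2 * b / (b ^ 2 + r ^ 2)) ^ 2 +
          (2 * Real.arctan (r / a) - 2 * Real.arctan (r / b)) ^ 2 / r ^ 2) * r
        ≤ ((2 * c / r ^ 2) ^ 2 + (2 * c / r) ^ 2 / r ^ 2) * r := by
          apply mul_le_mul_of_nonneg_right _ hr0.le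
          exact add_le_add h1 ((div_le_div_iff_of_pos_right (by positivity)).mpr h2)
      _ = 8 * c ^ 2 * r ^ (-3 : ℝ) := by rw [hr3]; field_simp; ring
  -- integrability of dominating functions
  have hg₁i : IntegrableOn g₁ (Ioc 0 b) volume :=
    (continuous_const.mul continuous_id).integrableOn_Ioc
  have hg₂i : IntegrableOn g₂ (Ioc b a) volume := by
    have hcont : ContinuousOn g₂ (Icc b a) :=
      continuousOn_const.div continuousOn_id (fun x hx => (hb.trans_le hx.1).ne')
    exact (hcont.integrableOn_Icc).mono_set Ioc_subset_Icc_self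
  have hg₃i : IntegrableOn g₃ (Ioi a) volume :=
    (integrableOn_Ioi_rpow_of_lt (by norm_num) ha).const_mul _
  -- integrability of φ on pieces
  have hφi : ∀ (s : Set ℝ) (g : ℝ → ℝ), MeasurableSet s → s ⊆ Ioi 0 →
      IntegrableOn g s volume → (∀ r ∈ s, φ r ≤ g r) → IntegrableOn φ s volume := by
    intro s g hs hs0 hgi hbound
    apply Integrable.mono hgi (hmeas.aestronglyMeasurable.restrict)
    rw [ae_restrict_iff' hs]
    filter_upwards with r hr
    rw [Real.norm_eq_abs, Real.norm_eq_abs, abs_of_nonneg (hφ0 r (hs0 hr))]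
    exact le_trans (hbound r hr) (le_abs_self _)
  have hφ1 : IntegrableOn φ (Ioc 0 b) volume :=
    hφi _ _ measurableSet_Ioc (fun r hr => hr.1) hg₁i hb₁
  have hφ2 : IntegrableOn φ (Ioc b a) volume :=
    hφi _ _ measurableSet_Ioc (fun r hr => hb.trans hr.1) hg₂i hb₂
  have hφ3 : IntegrableOn φ (Ioi a) volume :=
    hφi _ _ measurableSet_Ioi (fun r hr => ha.trans hr) hg₃i hb₃
  have hφ12 : IntegrableOn φ (Ioc 0 a) volume := by
    rw [← Ioc_union_Ioc_eq_Ioc hb.le hba]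
    exact hφ1.union hφ2
  -- split the integral
  have hsplit : ∫ r in Ioi (0:ℝ), φ r =
      (∫ r in Ioc (0:ℝ) b, φ r) + (∫ r in Ioc b a, φ r) + (∫ r in Ioi a, φ r) := by
    rw [show Ioi (0:ℝ) = Ioc 0 a ∪ Ioi a from (Ioc_union_Ioi_eq_Ioi ha.le).symm,
      setIntegral_union Ioc_disjoint_Ioi_same measurableSet_Ioi hφ12 hφ3,
      show Ioc (0:ℝ) a = Ioc 0 b ∪ Ioc b a from (Ioc_union_Ioc_eq_Ioc hb.le hba).symm,
      setIntegral_union (Ioc_disjoint_Ioc_of_le le_rfl) measurableSet_Ioc hφ1 hφ2]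
  -- bound each piece
  have hI₁ : (∫ r in Ioc (0:ℝ) b, φ r) ≤ 4 * t ^ 2 := by
    refine le_trans (setIntegral_mono_on hφ1 hg₁i measurableSet_Ioc hb₁) ?_
    have hval : (∫ r in Ioc (0:ℝ) b, g₁ r) = 8 * (c / (a * b)) ^ 2 * (b ^ 2 / 2) := by
      simp only [hg₁_def]
      rw [← intervalIntegral.integral_of_le hb.le, intervalIntegral.integral_const_mul,
        integral_id]
      norm_num
    rw [hval]
    have h4 : 8 * (c / (a * b)) ^ 2 * (b ^ 2 / 2) = 4 * (c / a) ^ 2 := by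
      field_simp
      ring
    rw [h4]
    have hca : c / a ≤ t := by rw [div_le_iff₀ ha]; nlinarith
    have h5 : (c / a) ^ 2 ≤ t ^ 2 :=
      sq_le_of_abs_le (by rw [abs_of_nonneg (by positivity)]; exact hca)
    linarith
  have hI₂ : (∫ r in Ioc b a, φ r) ≤ 16 * t ^ 2 := by
    refine le_trans (setIntegral_mono_on hφ2 hg₂i measurableSet_Ioc hb₂) ?_
    have hval : (∫ r in Ioc b a, g₂ r) = 2 * m ^ 2 * t := by
      simp only [hg₂_def, div_eq_mul_inv]
      rw [← intervalIntegral.integral_of_le hba, intervalIntegral.integral_const_mul,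
        integral_inv (notMem_uIcc_of_lt hb (hb.trans_le hba)),
        Real.log_div ha.ne' hb.ne']
    rw [hval]
    nlinarith [mul_le_mul_of_nonneg_right (mul_le_mul hm2 hm1 hm0 (by positivity : (0:ℝ) ≤ 2 * π)) ht,
      mul_nonneg (sub_nonneg.2 Real.pi_le_four) (sq_nonneg t)]
  have hI₃ : (∫ r in Ioi a, φ r) ≤ 4 * t ^ 2 := by
    refine le_trans (setIntegral_mono_on hφ3 hg₃i measurableSet_Ioi hb₃) ?_
    have hval : (∫ r in Ioi a, g₃ r) = 8 * c ^ 2 * (-a ^ ((-3:ℝ) + 1) / ((-3:ℝ) + 1)) := by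
      simp only [hg₃_def]
      rw [MeasureTheory.integral_const_mul, integral_Ioi_rpow_of_lt (by norm_num) ha]
    rw [hval]
    have ha2 : a ^ ((-3:ℝ) + 1) = (a ^ 2)⁻¹ := by
      rw [show (-3:ℝ) + 1 = -((2:ℕ):ℝ) by norm_num, Real.rpow_neg ha.le, Real.rpow_natCast]
    rw [ha2]
    have h4 : 8 * c ^ 2 * (-(a ^ 2)⁻¹ / ((-3:ℝ) + 1)) = 4 * (c / a) ^ 2 := by
      field_simp
      ring
    rw [h4]
    have hca : c / a ≤ t := by rw [div_le_iff₀ ha]; nlinarith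
    have h5 : (c / a) ^ 2 ≤ t ^ 2 :=
      sq_le_of_abs_le (by rw [abs_of_nonneg (by positivity)]; exact hca)
    linarith
  calc (∫ r in Ioi (0:ℝ), φ r) =
      (∫ r in Ioc (0:ℝ) b, φ r) + (∫ r in Ioc b a, φ r) + (∫ r in Ioi a, φ r) := hsplit
    _ ≤ 4 * t ^ 2 + 16 * t ^ 2 + 4 * t ^ 2 := by linarith
    _ ≤ 25 * t ^ 2 := by nlinarith [sq_nonneg t]


end Aux

/-- `‖Q_{λ₁} − Q_{λ₂}‖_H ≤ C·|log(λ₁/λ₂)|` where `Q_λ(r) = 2 arctan(r/λ)` and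
`‖v‖_H² = ∫₀^∞ ((∂_r v)² + v²/r²) r dr`. -/
theorem stmt_17 :
    ∃ C : ℝ, 0 < C ∧ ∀ l₁ l₂ : ℝ, 0 < l₁ → 0 < l₂ →
      Real.sqrt (∫ r in Ioi (0:ℝ),
          ((deriv (fun s : ℝ => 2 * Real.arctan (s / l₁) - 2 * Real.arctan (s / l₂)) r) ^ 2 +
            (2 * Real.arctan (r / l₁) - 2 * Real.arctan (r / l₂)) ^ 2 / r ^ 2) * r)
        ≤ C * |Real.log (l₁ / l₂)| := by
  refine ⟨5, by norm_num, fun l₁ l₂ h₁ h₂ => ?_⟩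
  have hd : deriv (fun s : ℝ => 2 * Real.arctan (s / l₁) - 2 * Real.arctan (s / l₂)) =
      fun r => 2 * l₁ / (l₁ ^ 2 + r ^ 2) - 2 * l₂ / (l₂ ^ 2 + r ^ 2) := by
    funext r
    exact ((hasDerivAt_Q l₁ r h₁.ne').sub (hasDerivAt_Q l₂ r h₂.ne')).deriv
  simp only [hd]
  rcases le_total l₂ l₁ with hle | hle
  · have hkey := key h₂ hle
    have ht : 0 ≤ Real.log l₁ - Real.log l₂ := sub_nonneg.2 (Real.log_le_log h₂ hle)
    calc Real.sqrt (∫ r in Ioi (0:ℝ),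
          ((2 * l₁ / (l₁ ^ 2 + r ^ 2) - 2 * l₂ / (l₂ ^ 2 + r ^ 2)) ^ 2 +
            (2 * Real.arctan (r / l₁) - 2 * Real.arctan (r / l₂)) ^ 2 / r ^ 2) * r)
        ≤ Real.sqrt (25 * (Real.log l₁ - Real.log l₂) ^ 2) := Real.sqrt_le_sqrt hkey
      _ = 5 * (Real.log l₁ - Real.log l₂) := by
          rw [show 25 * (Real.log l₁ - Real.log l₂) ^ 2 =
              (5 * (Real.log l₁ - Real.log l₂)) ^ 2 by ring,
            Real.sqrt_sq (by linarith)]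
      _ = 5 * |Real.log (l₁ / l₂)| := by
          rw [Real.log_div h₁.ne' h₂.ne', abs_of_nonneg ht]
  · have heq : (∫ r in Ioi (0:ℝ),
          ((2 * l₁ / (l₁ ^ 2 + r ^ 2) - 2 * l₂ / (l₂ ^ 2 + r ^ 2)) ^ 2 +
            (2 * Real.arctan (r / l₁) - 2 * Real.arctan (r / l₂)) ^ 2 / r ^ 2) * r) =
        ∫ r in Ioi (0:ℝ),
          ((2 * l₂ / (l₂ ^ 2 + r ^ 2) - 2 * l₁ / (l₁ ^ 2 + r ^ 2)) ^ 2 +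
            (2 * Real.arctan (r / l₂) - 2 * Real.arctan (r / l₁)) ^ 2 / r ^ 2) * r := by
      apply integral_congr_ae
      filter_upwards with r
      ring
    rw [heq]
    have hkey := key h₁ hle
    have ht : 0 ≤ Real.log l₂ - Real.log l₁ := sub_nonneg.2 (Real.log_le_log h₁ hle)
    calc Real.sqrt (∫ r in Ioi (0:ℝ),
          ((2 * l₂ / (l₂ ^ 2 + r ^ 2) - 2 * l₁ / (l₁ ^ 2 + r ^ 2)) ^ 2 +
            (2 * Real.arctan (r / l₂) - 2 * Real.arctan (r / l₁)) ^ 2 / r ^ 2) * r)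
        ≤ Real.sqrt (25 * (Real.log l₂ - Real.log l₁) ^ 2) := Real.sqrt_le_sqrt hkey
      _ = 5 * (Real.log l₂ - Real.log l₁) := by
          rw [show 25 * (Real.log l₂ - Real.log l₁) ^ 2 =
              (5 * (Real.log l₂ - Real.log l₁)) ^ 2 by ring,
            Real.sqrt_sq (by linarith)]
      _ = 5 * |Real.log (l₁ / l₂)| := by
          rw [Real.log_div h₁.ne' h₂.ne', abs_sub_comm, abs_of_nonneg ht]
end

section
/- Let ν > 9/2 and q ≠ 0, let p = p(ν) = ν(ν+2)·√π·Γ((3+ν)/2)/(4·Γ((4+ν)/2)), and define λ_c(t) = (p·|q|/(ν²(ν+1)))·t^{ν+1}/|log t| for 0 < t < 1. Let χ : [0,∞) → [0,1] be a smooth cutoff with χ(r) = 1 for r ≤ 1/2 and χ(r) = 0 for r ≥ 1, and set g_t(r) = (1 − χ(r/t))·(π − Q_{λ_c(t)}(r)), where Q_λ(r) = 2·arctan(r/λ). Then there exist C > 0 and T > 0 such that for all 0 < t ≤ T: ∫₀^∞ ((∂_r g_t(r))² + g_t(r)²/r²) r dr ≤ C·t^{2ν}·|log t|^{−2}. -/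
open MeasureTheory Set

lemma arctan_tail_le {x : ℝ} (hx : 0 < x) :
    Real.pi - 2 * Real.arctan x ≤ 2 / x := by
  have h1 : Real.arctan x⁻¹ = Real.pi / 2 - Real.arctan x := Real.arctan_inv_of_pos hx
  have h2 : Real.arctan x⁻¹ ≤ x⁻¹ := by
    have h3 : 0 ≤ Real.arctan x⁻¹ := by
      rw [← Real.arctan_zero]
      exact Real.arctan_strictMono.monotone (by positivity)
    have h4 := Real.le_tan h3 (Real.arctan_lt_pi_div_two x⁻¹)
    rwa [Real.tan_arctan] at h4
  rw [h1] at h2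
  rw [div_eq_mul_inv]
  linarith

lemma arctan_tail_nonneg (x : ℝ) : 0 ≤ Real.pi - 2 * Real.arctan x := by
  have := Real.arctan_lt_pi_div_two x
  linarith

set_option maxHeartbeats 1600000 in
/-- The `H`-norm of the truncated tail `g_t(r) = (1 − χ(r/t))(π − Q_{λ_c(t)}(r))`, where
`λ_c(t) = (p|q|/(ν²(ν+1)))·t^{ν+1}/|log t|`, satisfies
`∫₀^∞ ((∂_r g_t)² + g_t²/r²) r dr ≤ C·t^{2ν}·|log t|^{−2}` for all small `t > 0`. -/
theorem stmt_18 (ν q : ℝ) (hν : ν > 9/2) (hq : q ≠ 0)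
    (p : ℝ)
    (hp : p = ν * (ν + 2) * Real.sqrt Real.pi * Real.Gamma ((3 + ν) / 2) /
      (4 * Real.Gamma ((4 + ν) / 2)))
    (χ : ℝ → ℝ) (hχsmooth : ContDiff ℝ (⊤ : ℕ∞) χ)
    (hχ01 : ∀ r : ℝ, 0 ≤ r → 0 ≤ χ r ∧ χ r ≤ 1)
    (hχ1 : ∀ r : ℝ, 0 ≤ r → r ≤ 1/2 → χ r = 1)
    (hχ0 : ∀ r : ℝ, 1 ≤ r → χ r = 0)
    (lc : ℝ → ℝ)
    (hlc : ∀ t : ℝ, 0 < t → t < 1 →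
      lc t = (p * |q| / (ν ^ 2 * (ν + 1))) * t ^ (ν + 1) / |Real.log t|)
    (g : ℝ → ℝ → ℝ)
    (hg : ∀ t r : ℝ, g t r = (1 - χ (r / t)) * (Real.pi - 2 * Real.arctan (r / lc t))) :
    ∃ C : ℝ, 0 < C ∧ ∃ T : ℝ, 0 < T ∧ ∀ t : ℝ, 0 < t → t ≤ T →
      (∫ r in Ioi (0:ℝ), ((deriv (g t) r) ^ 2 + (g t r) ^ 2 / r ^ 2) * r)
        ≤ C * t ^ (2 * ν) / Real.log t ^ 2 := by
  have hΓ1 : 0 < Real.Gamma ((3 + ν) / 2) := Real.Gamma_pos_of_pos (by linarith)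
  have hΓ2 : 0 < Real.Gamma ((4 + ν) / 2) := Real.Gamma_pos_of_pos (by linarith)
  have hsqrt : 0 < Real.sqrt Real.pi := Real.sqrt_pos.mpr Real.pi_pos
  have hνpos : (0:ℝ) < ν := by linarith
  have hppos : 0 < p := by
    rw [hp]
    have h1 : 0 < ν * (ν + 2) := by nlinarith
    positivity
  have hqpos : 0 < |q| := abs_pos.mpr hq
  set K0 : ℝ := p * |q| / (ν ^ 2 * (ν + 1)) with hK0
  have hK0pos : 0 < K0 := by
    apply div_pos (mul_pos hppos hqpos)
    nlinarith
  -- bound on the derivative of χ on [0,1]; it vanishes for s > 1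
  obtain ⟨M, hM⟩ := (isCompact_Icc (a := (0:ℝ)) (b := 1)).exists_bound_of_continuousOn
      ((hχsmooth.continuous_deriv (by exact_mod_cast (le_top : (1:ℕ∞) ≤ ⊤))).continuousOn)
  have hM0 : 0 ≤ M := le_trans (norm_nonneg _) (hM 0 ⟨le_refl 0, by norm_num⟩)
  have hχder0 : ∀ s : ℝ, 1 < s → deriv χ s = 0 := by
    intro s hs
    have hEq : χ =ᶠ[nhds s] fun _ => (0:ℝ) := by
      filter_upwards [Ioi_mem_nhds hs] with x hx
      exact hχ0 x (le_of_lt hx)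
    rw [hEq.deriv_eq]
    exact deriv_const s 0
  have hχderM : ∀ s : ℝ, 0 ≤ s → |deriv χ s| ≤ M := by
    intro s hs
    rcases le_or_gt s 1 with h | h
    · simpa [Real.norm_eq_abs] using hM s ⟨hs, h⟩
    · rw [hχder0 s h]; simpa using hM0
  set K : ℝ := (4 * M + 2) ^ 2 + 4 with hK
  have hKpos : 0 < K := by positivity
  refine ⟨2 * K * K0 ^ 2, by positivity, 1/2, by norm_num, ?_⟩
  intro t ht htT
  have ht1 : t < 1 := by linarith
  have hlogt : Real.log t < 0 := Real.log_neg ht ht1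
  have hlogne : Real.log t ≠ 0 := ne_of_lt hlogt
  have hlog2 : 0 < Real.log t ^ 2 := by positivity
  have htr : 0 < t ^ (ν + 1) := Real.rpow_pos_of_pos ht _
  set lam : ℝ := lc t with hlamdef
  have hlamval : lam = K0 * t ^ (ν + 1) / |Real.log t| := by
    rw [hlamdef, hlc t ht ht1]
  have hlampos : 0 < lam := by
    rw [hlamval]
    have : 0 < |Real.log t| := abs_pos.mpr hlogne
    positivity
  have ht2 : 0 < t / 2 := by positivity
  -- derivative formula
  have hgfun : g t = fun r => (1 - χ (r / t)) * (Real.pi - 2 * Real.arctan (r / lam)) :=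
    funext fun r => hg t r
  have hQd : ∀ r : ℝ, HasDerivAt (g t)
      (-(deriv χ (r / t) * (1 / t)) * (Real.pi - 2 * Real.arctan (r / lam)) +
        (1 - χ (r / t)) * (-(2 * (1 / (1 + (r / lam) ^ 2) * (1 / lam))))) r := by
    intro r
    rw [hgfun]
    have h1 : HasDerivAt (fun x : ℝ => x / t) (1 / t) r := by
      simpa using (hasDerivAt_id r).div_const t
    have h2 : HasDerivAt χ (deriv χ (r / t)) (r / t) :=
      ((hχsmooth.differentiable (by simp)) (r / t)).hasDerivAt
    have h3 : HasDerivAt (fun x : ℝ => χ (x / t)) (deriv χ (r / t) * (1 / t)) r :=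
      h2.comp r h1
    have h4 : HasDerivAt (fun x : ℝ => x / lam) (1 / lam) r := by
      simpa using (hasDerivAt_id r).div_const lam
    have h5 : HasDerivAt (fun x : ℝ => Real.arctan (x / lam))
        (1 / (1 + (r / lam) ^ 2) * (1 / lam)) r :=
      by exact (Real.hasDerivAt_arctan (r / lam)).comp r h4
    have h6 : HasDerivAt (fun x : ℝ => 1 - χ (x / t)) (-(deriv χ (r / t) * (1 / t))) r := by
      exact h3.const_sub 1
    have h7 : HasDerivAt (fun x : ℝ => Real.pi - 2 * Real.arctan (x / lam))
        (-(2 * (1 / (1 + (r / lam) ^ 2) * (1 / lam)))) r := by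
      exact (h5.const_mul 2).const_sub Real.pi
    have h8 := h6.mul h7
    exact h8
  -- pointwise bound on g
  have hgb : ∀ r : ℝ, 0 < r → |g t r| ≤ 2 * lam / r := by
    intro r hr
    rw [hg t r, ← hlamdef]
    have hrl : 0 < r / lam := by positivity
    have h01 := hχ01 (r / t) (by positivity)
    have habs1 : |1 - χ (r / t)| ≤ 1 := by
      rw [abs_le]; constructor <;> linarith [h01.1, h01.2]
    have htail := arctan_tail_le hrl
    have htail0 := arctan_tail_nonneg (r / lam)
    calc |(1 - χ (r / t)) * (Real.pi - 2 * Real.arctan (r / lam))|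
        = |1 - χ (r / t)| * |Real.pi - 2 * Real.arctan (r / lam)| := abs_mul _ _
      _ ≤ 1 * (2 / (r / lam)) := by
          have h2 : |Real.pi - 2 * Real.arctan (r / lam)| ≤ 2 / (r / lam) := by
            rw [abs_of_nonneg htail0]; exact htail
          exact mul_le_mul habs1 h2 (abs_nonneg _) zero_le_one
      _ = 2 * lam / r := by
          rw [one_mul, div_div_eq_mul_div]
          all_goals ring
  -- pointwise bound on the derivative for r > t/2
  have hdb : ∀ r : ℝ, t / 2 < r → |deriv (g t) r| ≤ (4 * M + 2) * lam / r ^ 2 := by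
    intro r hr
    have hr0 : 0 < r := lt_trans ht2 hr
    rw [(hQd r).deriv]
    have hrl : 0 < r / lam := by positivity
    have htail := arctan_tail_le hrl
    have htail0 := arctan_tail_nonneg (r / lam)
    have h01 := hχ01 (r / t) (by positivity)
    have habs1 : |1 - χ (r / t)| ≤ 1 := by
      rw [abs_le]; constructor <;> linarith [h01.1, h01.2]
    -- first term bound
    have hA : |(-(deriv χ (r / t) * (1 / t))) * (Real.pi - 2 * Real.arctan (r / lam))|
        ≤ 4 * M * lam / r ^ 2 := by
      rcases le_or_gt r (2 * t) with hcase | hcase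
      · have hbd : |deriv χ (r / t)| ≤ M := hχderM (r / t) (by positivity)
        have htv : Real.pi - 2 * Real.arctan (r / lam) ≤ 2 * lam / r := by
          calc Real.pi - 2 * Real.arctan (r / lam) ≤ 2 / (r / lam) := htail
            _ = 2 * lam / r := by rw [div_div_eq_mul_div]; all_goals ring
        have e1 : |(-(deriv χ (r / t) * (1 / t)))| ≤ M * (1 / t) := by
          rw [abs_neg, abs_mul, abs_of_nonneg (by positivity : (0:ℝ) ≤ 1 / t)]
          exact mul_le_mul_of_nonneg_right hbd (by positivity)
        have e2 : |Real.pi - 2 * Real.arctan (r / lam)| ≤ 2 * lam / r := by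
          rw [abs_of_nonneg htail0]; exact htv
        have e3 : M * (1 / t) * (2 * lam / r) = 2 * M * lam / (t * r) := by
          field_simp
          all_goals ring
        calc |(-(deriv χ (r / t) * (1 / t))) * (Real.pi - 2 * Real.arctan (r / lam))|
            = |(-(deriv χ (r / t) * (1 / t)))| * |Real.pi - 2 * Real.arctan (r / lam)| :=
              abs_mul _ _
          _ ≤ M * (1 / t) * (2 * lam / r) :=
              mul_le_mul e1 e2 (abs_nonneg _) (by positivity)
          _ = 2 * M * lam / (t * r) := e3
          _ ≤ 4 * M * lam / r ^ 2 := by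
              rw [div_le_div_iff₀ (by positivity) (by positivity)]
              nlinarith [mul_le_mul_of_nonneg_left hcase
                (by positivity : (0:ℝ) ≤ 2 * M * lam * r)]
      · have : deriv χ (r / t) = 0 := by
          apply hχder0
          rw [lt_div_iff₀ ht]
          linarith
        rw [this]
        simp
        positivity
    -- second term bound
    have hB : |(1 - χ (r / t)) * (-(2 * (1 / (1 + (r / lam) ^ 2) * (1 / lam))))|
        ≤ 2 * lam / r ^ 2 := by
      have hkey : 1 / (1 + (r / lam) ^ 2) * (1 / lam) ≤ lam / r ^ 2 := by
        have h1 : (r / lam) ^ 2 ≤ 1 + (r / lam) ^ 2 := by linarith [sq_nonneg (r / lam)]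
        have h2 : 1 / (1 + (r / lam) ^ 2) ≤ 1 / (r / lam) ^ 2 :=
          one_div_le_one_div_of_le (by positivity) h1
        calc 1 / (1 + (r / lam) ^ 2) * (1 / lam) ≤ 1 / (r / lam) ^ 2 * (1 / lam) :=
              mul_le_mul_of_nonneg_right h2 (by positivity)
          _ = lam / r ^ 2 := by field_simp
      have hkey0 : 0 ≤ 1 / (1 + (r / lam) ^ 2) * (1 / lam) := by positivity
      have e4 : |(-(2 * (1 / (1 + (r / lam) ^ 2) * (1 / lam))))| =
          2 * (1 / (1 + (r / lam) ^ 2) * (1 / lam)) := by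
        rw [abs_neg, abs_of_nonneg (by positivity :
          (0:ℝ) ≤ 2 * (1 / (1 + (r / lam) ^ 2) * (1 / lam)))]
      calc |(1 - χ (r / t)) * (-(2 * (1 / (1 + (r / lam) ^ 2) * (1 / lam))))|
          = |1 - χ (r / t)| * (2 * (1 / (1 + (r / lam) ^ 2) * (1 / lam))) := by
            rw [abs_mul, e4]
        _ ≤ 1 * (2 * (lam / r ^ 2)) := by
            have h3 : 2 * (1 / (1 + (r / lam) ^ 2) * (1 / lam)) ≤ 2 * (lam / r ^ 2) := by
              linarith
            exact mul_le_mul habs1 h3 (by positivity) zero_le_one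
        _ = 2 * lam / r ^ 2 := by ring
    calc |(-(deriv χ (r / t) * (1 / t))) * (Real.pi - 2 * Real.arctan (r / lam)) +
          (1 - χ (r / t)) * (-(2 * (1 / (1 + (r / lam) ^ 2) * (1 / lam))))|
        ≤ 4 * M * lam / r ^ 2 + 2 * lam / r ^ 2 := le_trans (abs_add_le _ _) (add_le_add hA hB)
      _ = (4 * M + 2) * lam / r ^ 2 := by ring
  -- g and its derivative vanish for 0 < r < t/2
  have hzero : ∀ r : ℝ, 0 < r → r < t / 2 → g t r = 0 ∧ deriv (g t) r = 0 := by
    intro r hr0 hr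
    have hval : ∀ x : ℝ, 0 < x → x < t / 2 → g t x = 0 := by
      intro x hx0 hx
      rw [hg t x, hχ1 (x / t) (by positivity) (by rw [div_le_div_iff₀ ht (by norm_num)]; linarith)]
      ring
    refine ⟨hval r hr0 hr, ?_⟩
    have hEq : g t =ᶠ[nhds r] fun _ => (0:ℝ) := by
      filter_upwards [Ioo_mem_nhds hr0 hr] with x hx
      exact hval x hx.1 hx.2
    rw [hEq.deriv_eq]
    exact deriv_const r 0
  -- dominating function
  set Dfun : ℝ → ℝ := fun r => K * lam ^ 2 * r ^ (-3 : ℝ) with hDfun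
  set D : ℝ → ℝ := (Ioi (t / 2)).indicator Dfun with hD
  have hDint : Integrable D (volume.restrict (Ioi (0:ℝ))) := by
    have h1 : IntegrableOn (fun r : ℝ => r ^ (-3:ℝ)) (Ioi (t/2)) :=
      integrableOn_Ioi_rpow_of_lt (by norm_num) ht2
    have h2 : IntegrableOn Dfun (Ioi (t/2)) := by
      rw [hDfun]; exact h1.const_mul _
    exact ((integrable_indicator_iff measurableSet_Ioi).mpr h2).restrict
  have hrpow3 : ∀ r : ℝ, 0 < r → r ^ (-3:ℝ) = (r ^ 3)⁻¹ := by
    intro r hr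
    rw [Real.rpow_neg hr.le, show ((3:ℝ)) = ((3:ℕ):ℝ) by norm_num, Real.rpow_natCast]
  -- the pointwise a.e. comparison
  have hae : ∀ᵐ r ∂(volume.restrict (Ioi (0:ℝ))),
      ((deriv (g t) r) ^ 2 + (g t r) ^ 2 / r ^ 2) * r ≤ D r := by
    have hne : ∀ᵐ r : ℝ ∂(volume.restrict (Ioi (0:ℝ))), r ≠ t / 2 := by
      apply ae_restrict_of_ae
      rw [ae_iff]
      have : {x : ℝ | ¬ x ≠ t / 2} = {t / 2} := by ext x; simp
      rw [this]
      exact Real.volume_singleton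
    filter_upwards [ae_restrict_mem measurableSet_Ioi, hne] with r hr hrne
    have hr0 : (0:ℝ) < r := hr
    rcases lt_or_gt_of_ne hrne with hlt | hgt
    · obtain ⟨hg0, hd0⟩ := hzero r hr0 hlt
      rw [hg0, hd0, hD, indicator_of_notMem (by simp [mem_Ioi]; linarith)]
      simp
    · have hDr : D r = K * lam ^ 2 * (r ^ 3)⁻¹ := by
        rw [hD, indicator_of_mem (mem_Ioi.mpr hgt), hDfun]
        show K * lam ^ 2 * r ^ (-3:ℝ) = _
        rw [hrpow3 r hr0]
      rw [hDr]
      have h1 := hdb r hgt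
      have h2 := hgb r hr0
      have hd2 : (deriv (g t) r) ^ 2 ≤ ((4 * M + 2) * lam / r ^ 2) ^ 2 := by
        rw [← sq_abs]
        apply pow_le_pow_left₀ (abs_nonneg _) h1
      have hg2 : (g t r) ^ 2 ≤ (2 * lam / r) ^ 2 := by
        rw [← sq_abs]
        apply pow_le_pow_left₀ (abs_nonneg _) h2
      calc ((deriv (g t) r) ^ 2 + (g t r) ^ 2 / r ^ 2) * r
          ≤ (((4 * M + 2) * lam / r ^ 2) ^ 2 + (2 * lam / r) ^ 2 / r ^ 2) * r := by
            gcongr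
        _ = K * lam ^ 2 * (r ^ 3)⁻¹ := by
            have hrne : r ≠ 0 := ne_of_gt hr0
            rw [hK]
            field_simp
            all_goals ring
  have hnonneg : ∀ᵐ r ∂(volume.restrict (Ioi (0:ℝ))),
      0 ≤ ((deriv (g t) r) ^ 2 + (g t r) ^ 2 / r ^ 2) * r := by
    filter_upwards [ae_restrict_mem measurableSet_Ioi] with r hr
    have hr0 : (0:ℝ) < r := hr
    positivity
  -- value of the integral of D
  have hDval : ∫ r in Ioi (0:ℝ), D r = 2 * K * lam ^ 2 / t ^ 2 := by
    rw [hD, integral_indicator measurableSet_Ioi]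
    rw [Measure.restrict_restrict measurableSet_Ioi,
      inter_eq_left.mpr (Ioi_subset_Ioi ht2.le)]
    rw [hDfun]
    rw [MeasureTheory.integral_const_mul]
    rw [integral_Ioi_rpow_of_lt (by norm_num) ht2]
    rw [show (-3:ℝ) + 1 = -2 by norm_num]
    rw [show ((t/2:ℝ) ^ (-2:ℝ)) = ((t/2) ^ (2:ℕ))⁻¹ by
      rw [Real.rpow_neg ht2.le, show ((2:ℝ)) = ((2:ℕ):ℝ) by norm_num, Real.rpow_natCast]]
    field_simp
  -- final computation
  have hfinal : 2 * K * lam ^ 2 / t ^ 2 = 2 * K * K0 ^ 2 * t ^ (2 * ν) / Real.log t ^ 2 := by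
    rw [hlamval]
    have habs2 : |Real.log t| ^ 2 = Real.log t ^ 2 := sq_abs _
    have hrpow : (t ^ (ν + 1)) ^ 2 = t ^ (2 * ν) * t ^ 2 := by
      rw [sq]
      rw [← Real.rpow_add ht]
      rw [show (ν + 1) + (ν + 1) = (2 * ν) + (2:ℕ) by push_cast; ring]
      rw [Real.rpow_add ht, Real.rpow_natCast]
    field_simp
    rw [hrpow, habs2]
    all_goals ring
  calc (∫ r in Ioi (0:ℝ), ((deriv (g t) r) ^ 2 + (g t r) ^ 2 / r ^ 2) * r)
      ≤ ∫ r in Ioi (0:ℝ), D r := integral_mono_of_nonneg hnonneg hDint hae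
    _ = 2 * K * lam ^ 2 / t ^ 2 := hDval
    _ = 2 * K * K0 ^ 2 * t ^ (2 * ν) / Real.log t ^ 2 := hfinal
end
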